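/- arXiv:2206.07995 — 3 statements merged into one kernel-verified Lean document; each statement's English description precedes it below -/
import Mathlib

section
/- Let q ≥ 3 and n ≥ 1 be integers. Then max_{x ∈ Z_q^n} |L_1(x)| = n²(q−1) − n + 2, and the maximum is attained exactly at those sequences x = (x_1,…,x_n) ∈ Z_q^n whose number of runs is n (i.e., x_i ≠ x_{i+1} for all 1 ≤ i ≤ n−1) and which satisfy x_i ≠ x_{i+2} for all 1 ≤ i ≤ n−2. -/
open scoped Classical

/-- Length of a longest common subsequence of two lists. -/
noncomputable def lcsLen {α : Type*} (x y : List α) : ℕ :=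
  sSup {k | ∃ z : List α, z.Sublist x ∧ z.Sublist y ∧ z.length = k}

/-- The fixed-length Levenshtein (FLL) distance on `Fin n → Fin q`:
`d_ℓ(x,y) = n - LCS(x,y)`. -/
noncomputable def fllDist {q n : ℕ} (x y : Fin n → Fin q) : ℕ :=
  n - lcsLen (List.ofFn x) (List.ofFn y)

/-- The FLL `t`-ball centered at `x`. -/
noncomputable def fllBall (q n t : ℕ) (x : Fin n → Fin q) : Finset (Fin n → Fin q) :=
  Finset.univ.filter fun y => fllDist x y ≤ t

/-- The Hamming `t`-ball centered at `x`. -/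
noncomputable def hammingBall (q n t : ℕ) (x : Fin n → Fin q) : Finset (Fin n → Fin q) :=
  Finset.univ.filter fun y => hammingDist x y ≤ t

/-- The number of runs (maximal blocks of consecutive equal symbols) of a list. -/
def numRuns {α : Type*} [DecidableEq α] : List α → ℕ
  | [] => 0
  | [_] => 1
  | a :: b :: l => (if a = b then 0 else 1) + numRuns (b :: l)

/-- A list is alternating (of shape `σ σ' σ σ' ⋯` with `σ ≠ σ'`): adjacent entries
differ and entries two apart agree. -/
def IsAltList {α : Type*} (l : List α) : Prop :=
  (∀ i, ∀ h : i + 1 < l.length, l.get ⟨i, by omega⟩ ≠ l.get ⟨i + 1, h⟩) ∧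
  (∀ i, ∀ h : i + 2 < l.length, l.get ⟨i, by omega⟩ = l.get ⟨i + 2, h⟩)

/-- The contiguous block `l_i ⋯ l_j` of a list (0-indexed, inclusive). -/
def blockSeg {α : Type*} (l : List α) (i j : ℕ) : List α := (l.drop i).take (j + 1 - i)

/-- `(i, j)` indexes a maximal alternating segment of `l`. -/
def IsMaxAltSeg {α : Type*} (l : List α) (i j : ℕ) : Prop :=
  i ≤ j ∧ j < l.length ∧ IsAltList (blockSeg l i j) ∧
    (i = 0 ∨ ¬ IsAltList (blockSeg l (i - 1) j)) ∧
    (j = l.length - 1 ∨ ¬ IsAltList (blockSeg l i (j + 1)))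

/-- The index pairs of the maximal alternating segments of `l`. -/
noncomputable def maxAltSegs {α : Type*} (l : List α) : Finset (ℕ × ℕ) :=
  (Finset.range l.length ×ˢ Finset.range l.length).filter fun p => IsMaxAltSeg l p.1 p.2

/-- `A(x)`: the number of maximal alternating segments. -/
noncomputable def numAltSegs {α : Type*} (l : List α) : ℕ := (maxAltSegs l).card

/-- The sum `Σ s_i` of the lengths of the maximal alternating segments. -/
noncomputable def segLenSum {α : Type*} (l : List α) : ℕ :=
  ∑ p ∈ maxAltSegs l, (p.2 + 1 - p.1)

/-- The sum `Σ s_i²` of the squared lengths of the maximal alternating segments. -/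
noncomputable def segLenSqSum {α : Type*} (l : List α) : ℕ :=
  ∑ p ∈ maxAltSegs l, (p.2 + 1 - p.1) ^ 2

/-- `x ∈ Z_2^n` is `a`-balanced: it has `a` maximal alternating segments, each of
length `⌈n/a⌉` or `⌈n/a⌉ - 1`. -/
def IsBalanced (n a : ℕ) (x : Fin n → Fin 2) : Prop :=
  numAltSegs (List.ofFn x) = a ∧
    ∀ p ∈ maxAltSegs (List.ofFn x),
      p.2 + 1 - p.1 = (n + a - 1) / a ∨ p.2 + 1 - p.1 = (n + a - 1) / a - 1

/-- The number of zero entries of the difference vector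
`x' = (x₂ - x₁, …, x_n - x_{n-1})` (differences mod `q`). -/
def zerosDiff {q n : ℕ} (x : Fin n → Fin q) : ℕ :=
  (List.zipWith (fun a b => a - b) (List.ofFn x).tail (List.ofFn x)).countP fun v => v.val == 0

/-- Hamming weight of a binary word. -/
def wt {n : ℕ} (a : Fin n → Fin 2) : ℕ := (Finset.univ.filter fun i => a i ≠ 0).card

/-- An anticode of diameter one in `Z_2^n` under the FLL metric. -/
def IsAnticode1 (n : ℕ) (A : Finset (Fin n → Fin 2)) : Prop :=
  ∀ a ∈ A, ∀ b ∈ A, fllDist a b ≤ 1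

/-- A maximal anticode of diameter one. -/
def IsMaximalAnticode1 (n : ℕ) (A : Finset (Fin n → Fin 2)) : Prop :=
  IsAnticode1 n A ∧ ∀ B : Finset (Fin n → Fin 2), IsAnticode1 n B → A ⊆ B → A = B

/-- `χ(s)`: the total number, over all `x ∈ Z_q^n`, of maximal alternating
segments of `x` of length `s`. -/
noncomputable def chi (q n s : ℕ) : ℕ :=
  ∑ x : Fin n → Fin q, ((maxAltSegs (List.ofFn x)).filter fun p => p.2 + 1 - p.1 = s).card

/-!
A word `y` lies in `L_1(x)` iff it arises from `x` by deleting one symbol and inserting one.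
For `y ≠ x`, let `m ≤ M` be the first and last positions where `y` differs from `x`. Then either
`m = M` (a substitution), or on `[m, M]` the word `y` is `x` shifted one step left with a new
symbol at `M`, or `x` shifted one step right with a new symbol at `m`. As `m` and `M` are read off
`y`, these normal forms are in bijection with their parameters, and inclusion–exclusion gives
`|L_1(x)| + A(x) = 1 + n(q - 1)(1 + d(x))`, where `d(x)` counts the `i` with `x_i ≠ x_{i+1}` and
`A(x)` counts the blocks `x_i ⋯ x_{j+1}` alternating between two symbols (exactly the blocks on
which the left and the right shift can coincide). Since `d(x) ≤ n - 1`, `A(x) ≥ d(x)` (blocks of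
length two with distinct symbols alternate) and `n(q - 1) ≥ 2` for `q ≥ 3`, the ball is largest
iff `d(x) = n - 1` and there are no longer alternating blocks, i.e. iff `x_i ≠ x_{i+1}` and
`x_i ≠ x_{i+2}` for all `i`.
-/

open Finset

section Lcs

variable {α : Type*}

theorem List.Sublist.exists_eq_eraseIdx {z l : List α} (h : z.Sublist l)
    (hl : z.length + 1 = l.length) : ∃ i < l.length, z = l.eraseIdx i := by
  induction h with
  | slnil => simp at hl
  | cons _ h =>
      exact ⟨0, by simp, by simp [h.eq_of_length (by simpa using hl)]⟩
  | cons_cons _ _ ih =>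
      obtain ⟨i, hi, rfl⟩ := ih (by simpa using hl)
      exact ⟨i + 1, by simpa using hi, by simp⟩

theorem le_lcsLen_iff {x y : List α} {k : ℕ} :
    k ≤ lcsLen x y ↔ ∃ z : List α, z.Sublist x ∧ z.Sublist y ∧ z.length = k := by
  set S := {k | ∃ z : List α, z.Sublist x ∧ z.Sublist y ∧ z.length = k}
  have hbdd : BddAbove S := by
    refine ⟨x.length, ?_⟩
    rintro _ ⟨z, hzx, -, rfl⟩
    exact hzx.length_le
  have hne : S.Nonempty := ⟨0, [], List.nil_sublist _, List.nil_sublist _, rfl⟩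
  constructor
  · intro hk
    obtain ⟨z, hzx, hzy, hz⟩ := Nat.sSup_mem hne hbdd
    exact ⟨z.take k, (List.take_sublist _ _).trans hzx, (List.take_sublist _ _).trans hzy,
      List.length_take_of_le (hz ▸ hk)⟩
  · rintro ⟨z, hzx, hzy, rfl⟩
    exact le_csSup hbdd ⟨z, hzx, hzy, rfl⟩

theorem List.eraseIdx_ofFn {n : ℕ} (x : Fin (n + 1) → α) (a : Fin (n + 1)) :
    (List.ofFn x).eraseIdx a = List.ofFn (Fin.removeNth a x) := by
  refine List.ext_getElem (by simp [List.length_eraseIdx, a.isLt]) fun j h _ => ?_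
  simp only [List.getElem_eraseIdx, List.getElem_ofFn, Fin.removeNth, Fin.succAbove, Fin.lt_def,
    Fin.val_castSucc]
  split_ifs <;> rfl

end Lcs

section DiffSpan

variable {ι α : Type*} [LinearOrder ι] {x y : ι → α} {m M m' M' : ι}

structure IsDiffSpan (x y : ι → α) (m M : ι) : Prop where
  le : m ≤ M
  ne_left : y m ≠ x m
  ne_right : y M ≠ x M
  eq_of_lt : ∀ k, k < m → y k = x k
  eq_of_gt : ∀ k, M < k → y k = x k

theorem IsDiffSpan.unique (h : IsDiffSpan x y m M) (h' : IsDiffSpan x y m' M') :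
    m = m' ∧ M = M' := by
  constructor
  · rcases lt_trichotomy m m' with hlt | heq | hgt
    · exact absurd (h'.eq_of_lt m hlt) h.ne_left
    · exact heq
    · exact absurd (h.eq_of_lt m' hgt) h'.ne_left
  · rcases lt_trichotomy M M' with hlt | heq | hgt
    · exact absurd (h.eq_of_gt M' hlt) h'.ne_right
    · exact heq
    · exact absurd (h'.eq_of_gt M hgt) h.ne_right

theorem IsDiffSpan.eq_update [DecidableEq ι] (h : IsDiffSpan x y m m) :
    y = Function.update x m (y m) := by
  funext k
  rcases lt_trichotomy k m with hk | rfl | hk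
  · rw [Function.update_of_ne hk.ne, h.eq_of_lt k hk]
  · rw [Function.update_self]
  · rw [Function.update_of_ne hk.ne', h.eq_of_gt k hk]

theorem isDiffSpan_update [DecidableEq ι] {a : ι} {c : α} (hc : c ≠ x a) :
    IsDiffSpan x (Function.update x a c) a a where
  le := le_rfl
  ne_left := by rwa [Function.update_self]
  ne_right := by rwa [Function.update_self]
  eq_of_lt k hk := Function.update_of_ne hk.ne _ _
  eq_of_gt k hk := Function.update_of_ne hk.ne' _ _

theorem exists_isDiffSpan [Fintype ι] (h : y ≠ x) : ∃ m M, IsDiffSpan x y m M := by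
  set s := univ.filter fun k => y k ≠ x k
  have hs : s.Nonempty := by
    obtain ⟨k, hk⟩ := Function.ne_iff.1 h
    exact ⟨k, by simpa [s] using hk⟩
  have hmem : ∀ {k}, k ∈ s ↔ y k ≠ x k := by simp [s]
  refine ⟨s.min' hs, s.max' hs, min'_le _ _ (max'_mem _ _), hmem.1 (min'_mem _ _),
    hmem.1 (max'_mem _ _), fun k hk => ?_, fun k hk => ?_⟩
  · by_contra hne
    exact (min'_le s k (hmem.2 hne)).not_gt hk
  · by_contra hne
    exact (le_max' s k (hmem.2 hne)).not_gt hk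

end DiffSpan

section Shift

variable {α : Type*} {n : ℕ}

def deleteInsert (x : Fin (n + 1) → α) (a b : Fin (n + 1)) (c : α) : Fin (n + 1) → α :=
  Fin.insertNth b c (Fin.removeNth a x)

variable {x y : Fin (n + 1) → α} {a b k m M : Fin (n + 1)} {c : α}

@[simp] theorem deleteInsert_apply_self : deleteInsert x a b c b = c :=
  Fin.insertNth_apply_same ..

theorem deleteInsert_self [DecidableEq α] : deleteInsert x a a c = Function.update x a c :=
  Fin.insertNth_removeNth ..

theorem deleteInsert_apply_of_lt_of_lt (ha : k < a) (hb : k < b) :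
    deleteInsert x a b c k = x k := by
  rw [deleteInsert, Fin.insertNth_apply_below hb, eq_rec_constant, Fin.removeNth,
    Fin.succAbove_of_castSucc_lt _ _ (by rwa [Fin.castSucc_castPred]), Fin.castSucc_castPred]

theorem deleteInsert_apply_of_gt_of_gt (ha : a < k) (hb : b < k) :
    deleteInsert x a b c k = x k := by
  rw [deleteInsert, Fin.insertNth_apply_above hb, eq_rec_constant, Fin.removeNth,
    Fin.succAbove_of_le_castSucc _ _ (Fin.le_castSucc_iff.2 (by rwa [Fin.succ_pred])),
    Fin.succ_pred]

theorem deleteInsert_apply_castSucc {i : Fin n} (ha : a ≤ i.castSucc) (hb : i.succ ≤ b) :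
    deleteInsert x a b c i.castSucc = x i.succ := by
  rw [deleteInsert, Fin.insertNth_apply_below (Fin.castSucc_lt_iff_succ_le.2 hb), eq_rec_constant,
    Fin.removeNth, Fin.castPred_castSucc, Fin.succAbove_of_le_castSucc _ _ ha]

theorem deleteInsert_apply_succ {i : Fin n} (hb : b ≤ i.castSucc) (ha : i.succ ≤ a) :
    deleteInsert x a b c i.succ = x i.castSucc := by
  rw [deleteInsert, Fin.insertNth_apply_above (Fin.le_castSucc_iff.1 hb), eq_rec_constant,
    Fin.removeNth, Fin.pred_succ,
    Fin.succAbove_of_castSucc_lt _ _ (Fin.castSucc_lt_iff_succ_le.2 ha)]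

theorem isDiffSpan_deleteInsert_of_le (hab : a ≤ b) (ha : deleteInsert x a b c a ≠ x a)
    (hc : c ≠ x b) : IsDiffSpan x (deleteInsert x a b c) a b where
  le := hab
  ne_left := ha
  ne_right := by rwa [deleteInsert_apply_self]
  eq_of_lt k hk := deleteInsert_apply_of_lt_of_lt hk (hk.trans_le hab)
  eq_of_gt k hk := deleteInsert_apply_of_gt_of_gt (hab.trans_lt hk) hk

theorem isDiffSpan_deleteInsert_of_ge (hba : b ≤ a) (ha : deleteInsert x a b c a ≠ x a)
    (hc : c ≠ x b) : IsDiffSpan x (deleteInsert x a b c) b a where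
  le := hba
  ne_left := by rwa [deleteInsert_apply_self]
  ne_right := ha
  eq_of_lt k hk := deleteInsert_apply_of_lt_of_lt (hk.trans_le hba) hk
  eq_of_gt k hk := deleteInsert_apply_of_gt_of_gt hk (hba.trans_lt hk)

structure IsLeftShiftOn (x y : Fin (n + 1) → α) (m M : Fin (n + 1)) : Prop
    extends IsDiffSpan x y m M where
  shift : ∀ i : Fin n, m ≤ i.castSucc → i.succ ≤ M → y i.castSucc = x i.succ

structure IsRightShiftOn (x y : Fin (n + 1) → α) (m M : Fin (n + 1)) : Prop
    extends IsDiffSpan x y m M where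
  shift : ∀ i : Fin n, m ≤ i.castSucc → i.succ ≤ M → y i.succ = x i.castSucc

theorem IsDiffSpan.isLeftShiftOn_of_le (hab : a ≤ b)
    (h : IsDiffSpan x (deleteInsert x a b c) m M) :
    IsLeftShiftOn x (deleteInsert x a b c) m M := by
  have ham : a ≤ m := by
    by_contra! hma
    exact h.ne_left (deleteInsert_apply_of_lt_of_lt hma (hma.trans_le hab))
  have hMb : M ≤ b := by
    by_contra! hbM
    exact h.ne_right (deleteInsert_apply_of_gt_of_gt (hab.trans_lt hbM) hbM)
  exact ⟨h, fun i hi hi' => deleteInsert_apply_castSucc (ham.trans hi) (hi'.trans hMb)⟩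

theorem IsDiffSpan.isRightShiftOn_of_ge (hba : b ≤ a)
    (h : IsDiffSpan x (deleteInsert x a b c) m M) :
    IsRightShiftOn x (deleteInsert x a b c) m M := by
  have hbm : b ≤ m := by
    by_contra! hmb
    exact h.ne_left (deleteInsert_apply_of_lt_of_lt (hmb.trans_le hba) hmb)
  have hMa : M ≤ a := by
    by_contra! haM
    exact h.ne_right (deleteInsert_apply_of_gt_of_gt haM (hba.trans_lt haM))
  exact ⟨h, fun i hi hi' => deleteInsert_apply_succ (hbm.trans hi) (hi'.trans hMa)⟩

theorem IsLeftShiftOn.eq_deleteInsert (h : IsLeftShiftOn x y m M) :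
    y = deleteInsert x m M (y M) := by
  funext k
  rcases lt_or_ge k m with hkm | hmk
  · rw [h.eq_of_lt k hkm, deleteInsert_apply_of_lt_of_lt hkm (hkm.trans_le h.le)]
  rcases lt_trichotomy k M with hkM | rfl | hMk
  · obtain ⟨i, rfl⟩ := Fin.exists_castSucc_eq.2 (hkM.trans_le (Fin.le_last M)).ne
    have hiM := Fin.castSucc_lt_iff_succ_le.1 hkM
    rw [h.shift i hmk hiM, deleteInsert_apply_castSucc hmk hiM]
  · rw [deleteInsert_apply_self]
  · rw [h.eq_of_gt k hMk, deleteInsert_apply_of_gt_of_gt (h.le.trans_lt hMk) hMk]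

theorem IsRightShiftOn.eq_deleteInsert (h : IsRightShiftOn x y m M) :
    y = deleteInsert x M m (y m) := by
  funext k
  rcases lt_trichotomy k m with hkm | rfl | hmk
  · rw [h.eq_of_lt k hkm, deleteInsert_apply_of_lt_of_lt (hkm.trans_le h.le) hkm]
  · rw [deleteInsert_apply_self]
  rcases le_or_gt k M with hkM | hMk
  · obtain ⟨i, rfl⟩ := Fin.exists_succ_eq.2 ((Fin.zero_le m).trans_lt hmk).ne'
    have hmi := Fin.le_castSucc_iff.2 hmk
    rw [h.shift i hmi hkM, deleteInsert_apply_succ hmi hkM]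
  · rw [h.eq_of_gt k hMk, deleteInsert_apply_of_gt_of_gt hMk (h.le.trans_lt hMk)]

theorem isLeftShiftOn_deleteInsert {i : Fin n} (hi : x i.castSucc ≠ x i.succ) (hM : i.succ ≤ M)
    (hc : c ≠ x M) : IsLeftShiftOn x (deleteInsert x i.castSucc M c) i.castSucc M :=
  have hle := (Fin.castSucc_lt_iff_succ_le.2 hM).le
  (isDiffSpan_deleteInsert_of_le hle (by rw [deleteInsert_apply_castSucc le_rfl hM]; exact hi.symm)
    hc).isLeftShiftOn_of_le hle

theorem isRightShiftOn_deleteInsert {j : Fin n} (hj : x j.castSucc ≠ x j.succ)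
    (hm : m ≤ j.castSucc) (hc : c ≠ x m) :
    IsRightShiftOn x (deleteInsert x j.succ m c) m j.succ :=
  have hle := (Fin.le_castSucc_iff.1 hm).le
  (isDiffSpan_deleteInsert_of_ge hle (by rw [deleteInsert_apply_succ hm le_rfl]; exact hj) hc
    ).isRightShiftOn_of_ge hle

end Shift

theorem mem_fllBall_one_iff {q n : ℕ} {x y : Fin (n + 1) → Fin q} :
    y ∈ fllBall q (n + 1) 1 x ↔ ∃ a b c, y = deleteInsert x a b c := by
  rw [fllBall, mem_filter, and_iff_right (mem_univ _), fllDist,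
    show ∀ k, n + 1 - k ≤ 1 ↔ n ≤ k by omega, le_lcsLen_iff]
  constructor
  · rintro ⟨z, hzx, hzy, hz⟩
    obtain ⟨a, ha, rfl⟩ := hzx.exists_eq_eraseIdx (by rw [hz, List.length_ofFn])
    obtain ⟨b, hb, hzb⟩ := hzy.exists_eq_eraseIdx (by rw [hz, List.length_ofFn])
    rw [List.length_ofFn] at ha hb
    refine ⟨⟨a, ha⟩, ⟨b, hb⟩, y ⟨b, hb⟩, Fin.eq_insertNth_iff.2 ⟨rfl, List.ofFn_injective ?_⟩⟩
    rw [← List.eraseIdx_ofFn, ← List.eraseIdx_ofFn]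
    exact hzb.symm
  · rintro ⟨a, b, c, rfl⟩
    refine ⟨List.ofFn (Fin.removeNth a x), ?_, ?_, by simp⟩
    · rw [← List.eraseIdx_ofFn]
      exact List.eraseIdx_sublist _ _
    · have : Fin.removeNth b (deleteInsert x a b c) = Fin.removeNth a x :=
        Fin.removeNth_insertNth ..
      rw [← this, ← List.eraseIdx_ofFn]
      exact List.eraseIdx_sublist _ _

theorem mem_fllBall_one_iff_shift {q n : ℕ} {x y : Fin (n + 1) → Fin q} :
    y ∈ fllBall q (n + 1) 1 x ↔ y = x ∨ (∃ a, IsDiffSpan x y a a) ∨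
      (∃ m M, m < M ∧ IsLeftShiftOn x y m M) ∨ ∃ m M, m < M ∧ IsRightShiftOn x y m M := by
  rw [mem_fllBall_one_iff]
  constructor
  · rintro ⟨a, b, c, rfl⟩
    by_cases hx : deleteInsert x a b c = x
    · exact Or.inl hx
    obtain ⟨m, M, h⟩ := exists_isDiffSpan hx
    rcases h.le.lt_or_eq with hmM | rfl
    · rcases le_total a b with hab | hba
      · exact Or.inr (Or.inr (Or.inl ⟨m, M, hmM, h.isLeftShiftOn_of_le hab⟩))
      · exact Or.inr (Or.inr (Or.inr ⟨m, M, hmM, h.isRightShiftOn_of_ge hba⟩))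
    · exact Or.inr (Or.inl ⟨m, h⟩)
  · rintro (rfl | ⟨a, h⟩ | ⟨m, M, -, h⟩ | ⟨m, M, -, h⟩)
    · exact ⟨0, 0, y 0, by rw [deleteInsert_self, Function.update_eq_self]⟩
    · exact ⟨a, a, y a, by rw [deleteInsert_self]; exact h.eq_update⟩
    · exact ⟨m, M, y M, h.eq_deleteInsert⟩
    · exact ⟨M, m, y m, h.eq_deleteInsert⟩

section Blocks

variable {α : Type*} {n : ℕ}

noncomputable def changePoints (x : Fin (n + 1) → α) : Finset (Fin n) :=
  univ.filter fun i => x i.castSucc ≠ x i.succ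

/-- `(i, j) ∈ altBlocks x` iff `x` alternates between two distinct symbols on the positions
`i, …, j + 1`. -/
noncomputable def altBlocks (x : Fin (n + 1) → α) : Finset (Fin n × Fin n) :=
  univ.filter fun p => p.1 ≤ p.2 ∧ p.1 ∈ changePoints x ∧ p.2 ∈ changePoints x ∧
    ∀ i j : Fin n, i.succ = j.castSucc → p.1 ≤ i → j ≤ p.2 → x i.castSucc = x j.succ

variable {x : Fin (n + 1) → α}

theorem mem_changePoints {i : Fin n} : i ∈ changePoints x ↔ x i.castSucc ≠ x i.succ := by
  simp [changePoints]

theorem mem_altBlocks {i j : Fin n} :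
    (i, j) ∈ altBlocks x ↔ i ≤ j ∧ i ∈ changePoints x ∧ j ∈ changePoints x ∧
      ∀ k l : Fin n, k.succ = l.castSucc → i ≤ k → l ≤ j → x k.castSucc = x l.succ := by
  simp [altBlocks]

theorem isLeftShiftOn_of_mem_altBlocks {i j : Fin n} (h : (i, j) ∈ altBlocks x) :
    IsLeftShiftOn x (deleteInsert x i.castSucc j.succ (x j.castSucc)) i.castSucc j.succ :=
  have ⟨hij, hi, hj, _⟩ := mem_altBlocks.1 h
  isLeftShiftOn_deleteInsert (mem_changePoints.1 hi) (Fin.succ_le_succ_iff.2 hij)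
    (mem_changePoints.1 hj)

theorem isRightShiftOn_of_mem_altBlocks {i j : Fin n} (h : (i, j) ∈ altBlocks x) :
    IsRightShiftOn x (deleteInsert x i.castSucc j.succ (x j.castSucc)) i.castSucc j.succ := by
  have hL := isLeftShiftOn_of_mem_altBlocks h
  obtain ⟨-, -, -, halt⟩ := mem_altBlocks.1 h
  refine ⟨hL.toIsDiffSpan, fun k hik hkj => ?_⟩
  rw [Fin.castSucc_le_castSucc_iff] at hik
  rcases (Fin.succ_le_succ_iff.1 hkj).lt_or_eq with hkj | rfl
  · have hkl : k.succ = (⟨k + 1, by omega⟩ : Fin n).castSucc := rfl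
    rw [hkl, hL.shift _ (Fin.castSucc_le_castSucc_iff.2 (by simp only [Fin.le_def]; omega))
      (Fin.succ_le_succ_iff.2 hkj)]
    exact (halt k _ hkl hik hkj).symm
  · exact deleteInsert_apply_self

theorem card_changePoints_le : #(changePoints x) ≤ n :=
  (card_le_univ _).trans_eq (Fintype.card_fin n)

theorem card_changePoints_eq_iff :
    #(changePoints x) = n ↔ ∀ i : Fin n, x i.castSucc ≠ x i.succ := by
  have := card_eq_iff_eq_univ (changePoints x)
  rw [Fintype.card_fin] at this
  simp only [this, eq_univ_iff_forall, mem_changePoints]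

theorem diag_changePoints_subset_altBlocks : (changePoints x).diag ⊆ altBlocks x := by
  rintro ⟨i, j⟩ hp
  obtain ⟨hi, rfl⟩ : i ∈ changePoints x ∧ i = j := mem_diag.1 hp
  refine mem_altBlocks.2 ⟨le_rfl, hi, hi, fun k l hkl hik hli => absurd hkl ?_⟩
  simp only [Fin.ext_iff, Fin.val_succ, Fin.val_castSucc]
  omega

theorem altBlocks_subset_diag
    (h : ∀ i j : Fin n, i.succ = j.castSucc → x i.castSucc ≠ x j.succ) :
    altBlocks x ⊆ (changePoints x).diag := by
  rintro ⟨i, j⟩ hp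
  obtain ⟨hij, hi, -, halt⟩ := mem_altBlocks.1 hp
  refine mem_diag.2 ⟨hi, hij.antisymm (not_lt.1 fun hlt => ?_)⟩
  have hl : i.succ = (⟨i + 1, by omega⟩ : Fin n).castSucc := rfl
  exact h i _ hl (halt i _ hl le_rfl (Fin.le_def.2 (by simp only; omega)))

theorem mem_altBlocks_of_succ_eq_castSucc (h : ∀ i : Fin n, x i.castSucc ≠ x i.succ) {i j : Fin n}
    (hij : i.succ = j.castSucc) (hx : x i.castSucc = x j.succ) : (i, j) ∈ altBlocks x := by
  have hij' : (i : ℕ) + 1 = j := by simpa [Fin.ext_iff] using hij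
  refine mem_altBlocks.2 ⟨Fin.le_def.2 (by omega), mem_changePoints.2 (h i),
    mem_changePoints.2 (h j), fun k l hkl hik hlj => ?_⟩
  have hkl' : (k : ℕ) + 1 = l := by simpa [Fin.ext_iff] using hkl
  obtain rfl : k = i := Fin.ext (by rw [Fin.le_def] at hik hlj; omega)
  obtain rfl : l = j := Fin.ext (by omega)
  exact hx

theorem card_altBlocks_eq_iff (h : ∀ i : Fin n, x i.castSucc ≠ x i.succ) :
    #(altBlocks x) = n ↔ ∀ i j : Fin n, i.succ = j.castSucc → x i.castSucc ≠ x j.succ := by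
  have hdiag : #(changePoints x).diag = n := by rw [diag_card, card_changePoints_eq_iff.2 h]
  constructor
  · intro hcard i j hij hx
    have heq := eq_of_subset_of_card_le diag_changePoints_subset_altBlocks (by rw [hcard, hdiag])
    have hmem := heq ▸ mem_altBlocks_of_succ_eq_castSucc h hij hx
    have hij' : (i : ℕ) + 1 = j := by simpa [Fin.ext_iff] using hij
    have := (mem_diag.1 hmem).2
    simp only [Fin.ext_iff] at this
    omega
  · intro h2
    exact le_antisymm ((card_le_card (altBlocks_subset_diag h2)).trans_eq hdiag)
      (hdiag.symm.trans_le (card_le_card diag_changePoints_subset_altBlocks))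

end Blocks

section Count

variable {α : Type*} [Fintype α]

noncomputable def singleSubsts {ι : Type*} [LinearOrder ι] [Fintype ι] (x : ι → α) :
    Finset (ι → α) :=
  univ.filter fun y => ∃ a, IsDiffSpan x y a a

theorem mem_singleSubsts {ι : Type*} [LinearOrder ι] [Fintype ι] {x y : ι → α} :
    y ∈ singleSubsts x ↔ ∃ a, IsDiffSpan x y a a := by
  simp [singleSubsts]

theorem card_singleSubsts {ι : Type*} [LinearOrder ι] [Fintype ι] (x : ι → α) :
    #(singleSubsts x) = Fintype.card ι * (Fintype.card α - 1) := by
  have hdom : #(univ.sigma fun a : ι => univ.erase (x a)) =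
      Fintype.card ι * (Fintype.card α - 1) := by
    simp [card_sigma, card_erase_of_mem]
  rw [← hdom]
  symm
  refine card_bij (fun p _ => Function.update x p.1 p.2) (fun p hp => ?_)
    (fun ⟨a, c⟩ hp ⟨a', c'⟩ hp' he => ?_) fun y hy => ?_
  · simp only [mem_sigma, mem_univ, mem_erase, true_and, and_true] at hp
    exact mem_filter.2 ⟨mem_univ _, p.1, isDiffSpan_update hp⟩
  · simp only [mem_sigma, mem_univ, mem_erase, true_and, and_true] at hp hp' he
    obtain ⟨rfl, -⟩ := (isDiffSpan_update hp).unique (he ▸ isDiffSpan_update hp')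
    simpa using congr_fun he a
  · obtain ⟨a, h⟩ := (mem_filter.1 hy).2
    exact ⟨⟨a, y a⟩, by simpa using h.ne_left, h.eq_update.symm⟩

variable {n : ℕ}

noncomputable def leftShifts (x : Fin (n + 1) → α) : Finset (Fin (n + 1) → α) :=
  univ.filter fun y => ∃ m M, m < M ∧ IsLeftShiftOn x y m M

noncomputable def rightShifts (x : Fin (n + 1) → α) : Finset (Fin (n + 1) → α) :=
  univ.filter fun y => ∃ m M, m < M ∧ IsRightShiftOn x y m M

theorem mem_leftShifts {x y : Fin (n + 1) → α} :
    y ∈ leftShifts x ↔ ∃ m M, m < M ∧ IsLeftShiftOn x y m M := by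
  simp [leftShifts]

theorem mem_rightShifts {x y : Fin (n + 1) → α} :
    y ∈ rightShifts x ↔ ∃ m M, m < M ∧ IsRightShiftOn x y m M := by
  simp [rightShifts]

theorem card_leftShifts (x : Fin (n + 1) → α) :
    #(leftShifts x) = (∑ i ∈ changePoints x, #(Ici i.succ)) * (Fintype.card α - 1) := by
  have hdom :
      #(((changePoints x).sigma fun i => Ici i.succ).sigma fun p => univ.erase (x p.2)) =
      (∑ i ∈ changePoints x, #(Ici i.succ)) * (Fintype.card α - 1) := by
    simp [card_sigma, card_erase_of_mem, sum_mul]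
  rw [← hdom]
  symm
  refine card_bij (fun p _ => deleteInsert x p.1.1.castSucc p.1.2 p.2) (fun p hp => ?_)
    (fun ⟨⟨i, M⟩, c⟩ hp ⟨⟨i', M'⟩, c'⟩ hp' he => ?_) fun y hy => ?_
  · simp only [mem_sigma, mem_Ici, mem_erase, mem_univ, and_true] at hp
    exact mem_leftShifts.2 ⟨_, _, Fin.castSucc_lt_iff_succ_le.2 hp.1.2,
      isLeftShiftOn_deleteInsert (mem_changePoints.1 hp.1.1) hp.1.2 hp.2⟩
  · simp only [mem_sigma, mem_Ici, mem_erase, mem_univ, and_true] at hp hp' he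
    obtain ⟨hii', rfl⟩ :=
      (isLeftShiftOn_deleteInsert (mem_changePoints.1 hp.1.1) hp.1.2 hp.2).unique
        (he ▸ isLeftShiftOn_deleteInsert (mem_changePoints.1 hp'.1.1) hp'.1.2 hp'.2).toIsDiffSpan
    obtain rfl := Fin.castSucc_injective _ hii'
    simpa using congr_fun he M
  · obtain ⟨m, M, hmM, h⟩ := mem_leftShifts.1 hy
    obtain ⟨i, rfl⟩ := Fin.exists_castSucc_eq.2 (hmM.trans_le (Fin.le_last M)).ne
    have hiM := Fin.castSucc_lt_iff_succ_le.1 hmM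
    refine ⟨⟨⟨i, M⟩, y M⟩, ?_, h.eq_deleteInsert.symm⟩
    simp only [mem_sigma, mem_Ici, mem_erase, mem_univ, and_true]
    refine ⟨⟨mem_changePoints.2 fun hx => h.ne_left ?_, hiM⟩, h.ne_right⟩
    rw [h.shift i le_rfl hiM, hx]

theorem card_rightShifts (x : Fin (n + 1) → α) :
    #(rightShifts x) = (∑ j ∈ changePoints x, #(Iic j.castSucc)) * (Fintype.card α - 1) := by
  have hdom :
      #(((changePoints x).sigma fun j => Iic j.castSucc).sigma fun p => univ.erase (x p.2)) =
      (∑ j ∈ changePoints x, #(Iic j.castSucc)) * (Fintype.card α - 1) := by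
    simp [card_sigma, card_erase_of_mem, sum_mul]
  rw [← hdom]
  symm
  refine card_bij (fun p _ => deleteInsert x p.1.1.succ p.1.2 p.2) (fun p hp => ?_)
    (fun ⟨⟨j, m⟩, c⟩ hp ⟨⟨j', m'⟩, c'⟩ hp' he => ?_) fun y hy => ?_
  · simp only [mem_sigma, mem_Iic, mem_erase, mem_univ, and_true] at hp
    exact mem_rightShifts.2 ⟨_, _, Fin.le_castSucc_iff.1 hp.1.2,
      isRightShiftOn_deleteInsert (mem_changePoints.1 hp.1.1) hp.1.2 hp.2⟩
  · simp only [mem_sigma, mem_Iic, mem_erase, mem_univ, and_true] at hp hp' he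
    obtain ⟨rfl, hjj'⟩ :=
      (isRightShiftOn_deleteInsert (mem_changePoints.1 hp.1.1) hp.1.2 hp.2).unique
        (he ▸ isRightShiftOn_deleteInsert (mem_changePoints.1 hp'.1.1) hp'.1.2 hp'.2).toIsDiffSpan
    obtain rfl := Fin.succ_injective _ hjj'
    simpa using congr_fun he m
  · obtain ⟨m, M, hmM, h⟩ := mem_rightShifts.1 hy
    obtain ⟨j, rfl⟩ := Fin.exists_succ_eq.2 ((Fin.zero_le m).trans_lt hmM).ne'
    have hmj := Fin.le_castSucc_iff.2 hmM
    refine ⟨⟨⟨j, m⟩, y m⟩, ?_, h.eq_deleteInsert.symm⟩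
    simp only [mem_sigma, mem_Iic, mem_erase, mem_univ, and_true]
    refine ⟨⟨mem_changePoints.2 fun hx => h.ne_right ?_, hmj⟩, h.ne_left⟩
    rw [h.shift j hmj le_rfl, hx]

theorem card_leftShifts_inter_rightShifts [DecidableEq α] (x : Fin (n + 1) → α) :
    #(leftShifts x ∩ rightShifts x) = #(altBlocks x) := by
  symm
  refine card_bij (fun p _ => deleteInsert x p.1.castSucc p.2.succ (x p.2.castSucc))
    (fun ⟨i, j⟩ hp => ?_) (fun ⟨i, j⟩ hp ⟨i', j'⟩ hp' he => ?_) fun y hy => ?_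
  · have hlt := Fin.castSucc_lt_succ_iff.2 (mem_altBlocks.1 hp).1
    exact mem_inter.2 ⟨mem_leftShifts.2 ⟨_, _, hlt, isLeftShiftOn_of_mem_altBlocks hp⟩,
      mem_rightShifts.2 ⟨_, _, hlt, isRightShiftOn_of_mem_altBlocks hp⟩⟩
  · obtain ⟨hii', hjj'⟩ := (isLeftShiftOn_of_mem_altBlocks hp).unique
      (he ▸ isLeftShiftOn_of_mem_altBlocks hp').toIsDiffSpan
    exact Prod.ext (Fin.castSucc_injective _ hii') (Fin.succ_injective _ hjj')
  · obtain ⟨hyL, hyR⟩ := mem_inter.1 hy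
    obtain ⟨m, M, hmM, hL⟩ := mem_leftShifts.1 hyL
    obtain ⟨m', M', -, hR⟩ := mem_rightShifts.1 hyR
    obtain ⟨rfl, rfl⟩ := hL.unique hR.toIsDiffSpan
    obtain ⟨i, rfl⟩ := Fin.exists_castSucc_eq.2 (hmM.trans_le (Fin.le_last M)).ne
    obtain ⟨j, rfl⟩ := Fin.exists_succ_eq.2 ((Fin.zero_le _).trans_lt hmM).ne'
    have hij := Fin.castSucc_lt_succ_iff.1 hmM
    have hyj : y j.succ = x j.castSucc := hR.shift j (Fin.castSucc_le_castSucc_iff.2 hij) le_rfl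
    refine ⟨(i, j), mem_altBlocks.2 ⟨hij, ?_, ?_, fun k l hkl hik hlj => ?_⟩, ?_⟩
    · refine mem_changePoints.2 fun hx => hL.ne_left ?_
      rw [hL.shift i le_rfl (Fin.succ_le_succ_iff.2 hij), hx]
    · exact mem_changePoints.2 fun hx => hR.ne_right (hyj.trans hx)
    · have hkl' : (k : ℕ) + 1 = l := by simpa [Fin.ext_iff] using hkl
      calc x k.castSucc = y k.succ :=
            (hR.shift k (Fin.castSucc_le_castSucc_iff.2 hik)
              (Fin.succ_le_succ_iff.2 (by simp only [Fin.le_def]; omega))).symm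
        _ = y l.castSucc := by rw [hkl]
        _ = x l.succ :=
            hL.shift l (Fin.castSucc_le_castSucc_iff.2 (by simp only [Fin.le_def]; omega))
              (Fin.succ_le_succ_iff.2 hlj)
    · rw [← hyj]
      exact hL.eq_deleteInsert.symm

end Count

theorem fllBall_one_eq {q n : ℕ} (x : Fin (n + 1) → Fin q) :
    fllBall q (n + 1) 1 x = insert x (singleSubsts x ∪ (leftShifts x ∪ rightShifts x)) := by
  ext y
  simp only [mem_fllBall_one_iff_shift, mem_insert, mem_union, mem_singleSubsts, mem_leftShifts,
    mem_rightShifts]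

theorem card_fllBall_one_add_card_altBlocks {q n : ℕ} (x : Fin (n + 1) → Fin q) :
    #(fllBall q (n + 1) 1 x) + #(altBlocks x) =
      1 + (n + 1) * (q - 1) * (1 + #(changePoints x)) := by
  have hx : x ∉ singleSubsts x ∪ (leftShifts x ∪ rightShifts x) := by
    simp only [mem_singleSubsts, mem_leftShifts, mem_rightShifts, mem_union, not_or, not_exists,
      not_and]
    exact ⟨fun a h => h.ne_left rfl, fun m M _ h => h.ne_left rfl, fun m M _ h => h.ne_left rfl⟩
  have hdisj : Disjoint (singleSubsts x) (leftShifts x ∪ rightShifts x) := by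
    refine disjoint_left.2 fun y hy hy' => ?_
    obtain ⟨a, hS⟩ := mem_singleSubsts.1 hy
    obtain ⟨m, M, hmM, h⟩ : ∃ m M, m < M ∧ IsDiffSpan x y m M := by
      rcases mem_union.1 hy' with hy' | hy'
      · obtain ⟨m, M, hmM, h⟩ := mem_leftShifts.1 hy'
        exact ⟨m, M, hmM, h.toIsDiffSpan⟩
      · obtain ⟨m, M, hmM, h⟩ := mem_rightShifts.1 hy'
        exact ⟨m, M, hmM, h.toIsDiffSpan⟩
    obtain ⟨rfl, rfl⟩ := hS.unique h
    exact hmM.false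
  have hsum : ∑ i ∈ changePoints x, (#(Ici i.succ) + #(Iic i.castSucc)) =
      #(changePoints x) * (n + 1) := by
    refine sum_const_nat fun i _ => ?_
    rw [Fin.card_Ici, Fin.card_Iic, Fin.val_succ, Fin.val_castSucc]
    omega
  have hLR := card_union_add_card_inter (leftShifts x) (rightShifts x)
  rw [card_leftShifts_inter_rightShifts, card_leftShifts, card_rightShifts, ← add_mul,
    ← sum_add_distrib, hsum, Fintype.card_fin] at hLR
  rw [fllBall_one_eq, card_insert_of_notMem hx, card_union_of_disjoint hdisj, card_singleSubsts,
    Fintype.card_fin, Fintype.card_fin]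
  linear_combination hLR

theorem card_fllBall_one_le_and_eq_iff {q n : ℕ} (hq : 3 ≤ q) (x : Fin (n + 1) → Fin q) :
    #(fllBall q (n + 1) 1 x) ≤ (n + 1) ^ 2 * (q - 1) - (n + 1) + 2 ∧
      (#(fllBall q (n + 1) 1 x) = (n + 1) ^ 2 * (q - 1) - (n + 1) + 2 ↔
        #(changePoints x) = n ∧ #(altBlocks x) = n) := by
  have hball := card_fllBall_one_add_card_altBlocks x
  have hd := card_changePoints_le (x := x)
  have ht := card_le_card (diag_changePoints_subset_altBlocks (x := x))
  rw [diag_card] at ht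
  have hK : 2 ≤ (n + 1) * (q - 1) :=
    (show 2 ≤ q - 1 by omega).trans (Nat.le_mul_of_pos_left _ n.succ_pos)
  rw [sq, mul_assoc]
  generalize (n + 1) * (q - 1) = K at hball hK ⊢
  generalize #(fllBall q (n + 1) 1 x) = B at hball ⊢
  generalize #(changePoints x) = d at *
  generalize #(altBlocks x) = t at *
  -- writing `n = d + e`, the ball falls short of the bound by `(K - 1) * e + (t - d)`
  obtain ⟨e, rfl⟩ := Nat.exists_eq_add_of_le hd
  have hsplit : (d + e + 1) * K = K * (1 + d) + K * e := by ring
  have he : 2 * e ≤ K * e := Nat.mul_le_mul_right e hK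
  have he0 : e = 0 → K * e = 0 := fun h => by rw [h, mul_zero]
  have hR : d + e + 1 ≤ (d + e + 1) * K := Nat.le_mul_of_pos_right _ (by omega)
  refine ⟨by omega, fun h => ⟨by omega, by omega⟩, fun ⟨h1, h2⟩ => by omega⟩

theorem card_fllBall_one_eq_iff {q n : ℕ} (hq : 3 ≤ q) (x : Fin (n + 1) → Fin q) :
    #(fllBall q (n + 1) 1 x) = (n + 1) ^ 2 * (q - 1) - (n + 1) + 2 ↔
      (∀ i : ℕ, ∀ h : i + 1 < n + 1, x ⟨i, by omega⟩ ≠ x ⟨i + 1, h⟩) ∧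
        ∀ i : ℕ, ∀ h : i + 2 < n + 1, x ⟨i, by omega⟩ ≠ x ⟨i + 2, h⟩ := by
  have hadj : (∀ i : Fin n, x i.castSucc ≠ x i.succ) ↔
      ∀ i : ℕ, ∀ h : i + 1 < n + 1, x ⟨i, by omega⟩ ≠ x ⟨i + 1, h⟩ :=
    ⟨fun h i hi => h ⟨i, by omega⟩, fun h i => h i (by omega)⟩
  rw [(card_fllBall_one_le_and_eq_iff hq x).2, card_changePoints_eq_iff, ← hadj]
  refine and_congr_right fun h => ?_
  rw [card_altBlocks_eq_iff h]
  constructor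
  · intro h2 i hi
    exact h2 ⟨i, by omega⟩ ⟨i + 1, by omega⟩ rfl
  · intro h2 i j hij
    have hij' : (i : ℕ) + 1 = j := by simpa [Fin.ext_iff] using hij
    rw [show j.succ = ⟨i + 2, by omega⟩ from Fin.ext (by simp only [Fin.val_succ]; omega)]
    exact h2 i (by omega)

/-- For `q ≥ 3` and `n ≥ 1`, the maximum size of an FLL `1`-ball in
`Z_q^n` is `n²(q-1) - n + 2`, attained exactly at the sequences with `n` runs
(adjacent symbols distinct) satisfying `x_i ≠ x_{i+2}` for all `i`. -/
theorem max_fll_ball_nonbinary (q n : ℕ) (hq : 3 ≤ q) (hn : 1 ≤ n) :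
    (∀ x : Fin n → Fin q, (fllBall q n 1 x).card ≤ n ^ 2 * (q - 1) - n + 2) ∧
      (∃ x : Fin n → Fin q, (fllBall q n 1 x).card = n ^ 2 * (q - 1) - n + 2) ∧
      (∀ x : Fin n → Fin q,
        (fllBall q n 1 x).card = n ^ 2 * (q - 1) - n + 2 ↔
          ((∀ i : ℕ, ∀ h : i + 1 < n, x ⟨i, by omega⟩ ≠ x ⟨i + 1, h⟩) ∧
            (∀ i : ℕ, ∀ h : i + 2 < n, x ⟨i, by omega⟩ ≠ x ⟨i + 2, h⟩))) := by
  obtain ⟨n, rfl⟩ : ∃ m, n = m + 1 := ⟨n - 1, by omega⟩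
  refine ⟨fun x => (card_fllBall_one_le_and_eq_iff hq x).1, ?_, card_fllBall_one_eq_iff hq⟩
  refine ⟨fun k => ⟨k % 3, by omega⟩, (card_fllBall_one_eq_iff hq _).2 ⟨?_, ?_⟩⟩
  · intro i _ hx
    have := congrArg Fin.val hx
    simp only at this
    omega
  · intro i _ hx
    have := congrArg Fin.val hx
    simp only at this
    omega
end

section
/- Let n ≥ 1 and 1 ≤ α ≤ n be integers. Among all sequences y ∈ Z_2^n with A(y) = α, the size of the FLL 1-ball |L_1(y)| is maximal exactly for the α-balanced sequences; that is, for x ∈ Z_2^n with A(x) = α, |L_1(x)| = max{ |L_1(y)| : y ∈ Z_2^n, A(y) = α } if and only if x is α-balanced. -/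
open scoped Classical

/-!
For `y ≠ x` in the FLL `1`-ball, let `i ≤ j` be the first and the last position where `y`
differs from `x`. Then `y` arises from `x` either by deleting `x_i` and inserting `x_j + 1` at
`j`, or by inserting `x_i + 1` at `i` and deleting `x_j`. The first is possible iff `i = j` or
`x_i ≠ x_{i+1}`, the second iff `i = j` or `x_{j-1} ≠ x_j`, and the two words coincide iff `x`
alternates on `[i, j]`. Summing over `i ≤ j` gives
`2 |L_1(x)| + Σ s_k² = 2 + 3n + 2n (n - A(x))`.

So for fixed `A(x) = α` the ball is largest when `Σ s_k²` is smallest. As `Σ s_k = n`, the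
identity `s² = (s - q)(s - q + 1) + (2q - 1) s - q (q - 1)` with `q = ⌈n/α⌉` gives
`Σ s_k² ≥ (2q - 1) n - α q (q - 1)`, with equality iff every `s_k` is `q` or `q - 1`; and a
word with `α` segments of such lengths exists.
-/

theorem List.exists_eraseIdx_eq_of_sublist {α : Type*} :
    ∀ {l z : List α}, z.Sublist l → z.length + 1 = l.length → ∃ i < l.length, l.eraseIdx i = z
  | [], _, _, hlen => by simp at hlen
  | a :: l, z, .cons _ h, hlen => ⟨0, by simp, (h.eq_of_length (by simpa using hlen)).symm⟩
  | a :: l, _, .cons_cons _ h, hlen => by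
    obtain ⟨i, hi, rfl⟩ := exists_eraseIdx_eq_of_sublist h (by simpa using hlen)
    exact ⟨i + 1, by simpa using hi, rfl⟩

theorem Nat.two_mul_choose_two_add (m : ℕ) : 2 * m.choose 2 + m = m ^ 2 := by
  induction m with
  | zero => rfl
  | succ m ih => rw [Nat.choose_succ_succ, Nat.choose_one_right]; nlinarith

theorem Int.mul_add_one_nonneg (t : ℤ) : 0 ≤ t * (t + 1) := by
  rcases le_or_gt 0 t with h | h <;> nlinarith

namespace Finset

/-- Both sides count `C ×ˢ range n`: a pair `(t, m)` with `t < m` is the pair `(t, m)` on the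
left, and one with `m ≤ t` is the pair `(m, t + 1)` on the right. -/
theorem card_lt_fst_mem_add_card_lt_pred_snd_mem {n : ℕ} {C : Finset ℕ}
    (hC : ∀ t ∈ C, t + 1 < n) :
    ((range n ×ˢ range n).filter fun p => p.1 < p.2 ∧ p.1 ∈ C).card +
      ((range n ×ˢ range n).filter fun p => p.1 < p.2 ∧ p.2 - 1 ∈ C).card = C.card * n := by
  have hsplit := card_filter_add_card_filter_not (s := C ×ˢ range n) fun p => p.1 < p.2
  rw [card_product, card_range] at hsplit
  rw [← hsplit]
  congr 1
  · congr 1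
    ext ⟨i, j⟩
    simp only [mem_filter, mem_product, mem_range]
    constructor
    · rintro ⟨⟨-, hj⟩, hij, hi⟩
      exact ⟨⟨hi, hj⟩, hij⟩
    · rintro ⟨⟨hi, hj⟩, hij⟩
      exact ⟨⟨by have := hC i hi; omega, hj⟩, hij, hi⟩
  · refine card_nbij' (fun p => (p.2 - 1, p.1)) (fun p => (p.2, p.1 + 1)) ?_ ?_ ?_ ?_ <;>
      intro ⟨i, j⟩ <;> simp only [mem_coe, mem_filter, mem_product, mem_range] <;> intro h
    · exact ⟨⟨h.2.2, h.1.1⟩, by omega⟩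
    · have := hC _ h.1.1
      exact ⟨⟨h.1.2, by omega⟩, by omega, by simpa using h.1.1⟩
    · exact Prod.ext rfl (by omega)
    · simp

variable {ι : Type*}

theorem sum_sq_eq (s : Finset ι) (f : ι → ℤ) (q : ℤ) :
    ∑ i ∈ s, f i ^ 2 = ∑ i ∈ s, (f i - q) * (f i - q + 1) +
      ((2 * q - 1) * ∑ i ∈ s, f i - s.card * (q * (q - 1))) := by
  rw [mul_sum, ← nsmul_eq_mul, ← sum_const, ← sum_sub_distrib, ← sum_add_distrib]
  exact sum_congr rfl fun i _ => by ring

theorem le_sum_sq (s : Finset ι) (f : ι → ℤ) (q : ℤ) :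
    (2 * q - 1) * ∑ i ∈ s, f i - s.card * (q * (q - 1)) ≤ ∑ i ∈ s, f i ^ 2 := by
  rw [sum_sq_eq s f q, le_add_iff_nonneg_left]
  exact sum_nonneg fun i _ => Int.mul_add_one_nonneg _

theorem sum_sq_eq_iff (s : Finset ι) (f : ι → ℤ) (q : ℤ) :
    ∑ i ∈ s, f i ^ 2 = (2 * q - 1) * ∑ i ∈ s, f i - s.card * (q * (q - 1)) ↔
      ∀ i ∈ s, f i = q ∨ f i = q - 1 := by
  rw [sum_sq_eq s f q, add_eq_right, sum_eq_zero_iff_of_nonneg fun i _ => Int.mul_add_one_nonneg _]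
  refine forall₂_congr fun i _ => ?_
  rw [mul_eq_zero]
  omega

end Finset

section LCS

variable {α : Type*}

theorem bddAbove_commonSublist_lengths (x y : List α) :
    BddAbove {k | ∃ z : List α, z.Sublist x ∧ z.Sublist y ∧ z.length = k} := by
  refine ⟨x.length, ?_⟩
  rintro k ⟨z, hzx, -, rfl⟩
  exact hzx.length_le

theorem le_lcsLen {x y z : List α} (hx : z.Sublist x) (hy : z.Sublist y) : z.length ≤ lcsLen x y :=
  le_csSup (bddAbove_commonSublist_lengths x y) ⟨z, hx, hy, rfl⟩

theorem exists_sublist_length_eq_lcsLen (x y : List α) :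
    ∃ z : List α, z.Sublist x ∧ z.Sublist y ∧ z.length = lcsLen x y :=
  Nat.sSup_mem (s := {k | ∃ z : List α, z.Sublist x ∧ z.Sublist y ∧ z.length = k})
    ⟨0, [], List.nil_sublist x, List.nil_sublist y, rfl⟩ (bddAbove_commonSublist_lengths x y)

theorem lcsLen_le_length_left (x y : List α) : lcsLen x y ≤ x.length := by
  obtain ⟨z, hzx, -, hz⟩ := exists_sublist_length_eq_lcsLen x y
  exact hz ▸ hzx.length_le

end LCS

theorem isAltList_iff_of_fin_two {l : List (Fin 2)} :
    IsAltList l ↔ ∀ k (h : k + 1 < l.length), l[k] ≠ l[k + 1] := by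
  simp only [IsAltList, List.get_eq_getElem]
  refine ⟨fun h => h.1, fun h => ⟨h, fun k hk => ?_⟩⟩
  have h₁ := h k (by omega)
  have h₂ : l[k + 1] ≠ l[k + 2] := h (k + 1) hk
  omega

namespace FLL

open Finset

variable {n : ℕ}

/-! ### Maximal alternating segments -/

/-- `x_k`, read as `0` beyond the end so that `letter x (k + 1)` needs no bound. -/
def letter (x : Fin n → Fin 2) (k : ℕ) : Fin 2 := if h : k < n then x ⟨k, h⟩ else 0

theorem letter_of_lt (x : Fin n → Fin 2) {k : ℕ} (h : k < n) : letter x k = x ⟨k, h⟩ :=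
  dif_pos h

@[simp]
theorem letter_val (x : Fin n → Fin 2) (k : Fin n) : letter x k = x k :=
  letter_of_lt x k.isLt

theorem getElem_blockSeg_ofFn (x : Fin n → Fin 2) {i j k : ℕ} (hj : j < n)
    (h : k < (blockSeg (List.ofFn x) i j).length) :
    (blockSeg (List.ofFn x) i j)[k] = letter x (i + k) := by
  simp only [blockSeg, List.length_take, List.length_drop, List.length_ofFn] at h
  simp [blockSeg, letter_of_lt x (show i + k < n by omega)]

def AltOn (x : Fin n → Fin 2) (i j : ℕ) : Prop :=
  ∀ k, i ≤ k → k < j → letter x k ≠ letter x (k + 1)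

theorem AltOn.mono {x : Fin n → Fin 2} {i j i' j' : ℕ} (h : AltOn x i j)
    (hi : i ≤ i') (hj : j' ≤ j) : AltOn x i' j' :=
  fun k hk hk' => h k (hi.trans hk) (hk'.trans_le hj)

theorem AltOn.union {x : Fin n → Fin 2} {i j i' j' : ℕ} (h : AltOn x i j) (h' : AltOn x i' j')
    (hij : i' ≤ j) : AltOn x i j' := fun k hk hk' => by
  by_cases hkj : k < j
  · exact h k hk hkj
  · exact h' k (by omega) (by omega)

theorem altOn_self (x : Fin n → Fin 2) (j : ℕ) : AltOn x j j :=
  fun _ hk hk' => absurd (hk.trans_lt hk') (lt_irrefl _)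

theorem altOn_pred_left_iff {x : Fin n → Fin 2} {i j : ℕ} (hi : 0 < i) (hij : i ≤ j) :
    AltOn x (i - 1) j ↔ letter x (i - 1) ≠ letter x i ∧ AltOn x i j := by
  refine ⟨fun h => ⟨?_, h.mono (by omega) le_rfl⟩, fun ⟨h₁, h₂⟩ k hk hk' => ?_⟩
  · simpa [Nat.sub_add_cancel hi] using h (i - 1) le_rfl (by omega)
  · rcases hk.eq_or_lt with rfl | hlt
    · simpa [Nat.sub_add_cancel hi] using h₁
    · exact h₂ k (by omega) hk'

theorem altOn_succ_right_iff {x : Fin n → Fin 2} {i j : ℕ} (hij : i ≤ j) :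
    AltOn x i (j + 1) ↔ AltOn x i j ∧ letter x j ≠ letter x (j + 1) := by
  refine ⟨fun h => ⟨h.mono le_rfl (by omega), h j hij (by omega)⟩, fun ⟨h₁, h₂⟩ k hk hk' => ?_⟩
  rcases (Nat.lt_succ_iff.mp hk').eq_or_lt with rfl | hlt
  · exact h₂
  · exact h₁ k hk hlt

theorem isAltList_blockSeg_iff (x : Fin n → Fin 2) {i j : ℕ} (hij : i ≤ j) (hj : j < n) :
    IsAltList (blockSeg (List.ofFn x) i j) ↔ AltOn x i j := by
  have hlen : (blockSeg (List.ofFn x) i j).length = j + 1 - i := by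
    simp only [blockSeg, List.length_take, List.length_drop, List.length_ofFn]; omega
  rw [isAltList_iff_of_fin_two]
  constructor
  · intro h k hk hk'
    have := h (k - i) (by omega)
    rwa [getElem_blockSeg_ofFn x hj, getElem_blockSeg_ofFn x hj,
      show i + (k - i) = k by omega, show i + (k - i + 1) = k + 1 by omega] at this
  · intro h k hk
    rw [getElem_blockSeg_ofFn x hj, getElem_blockSeg_ofFn x hj, ← add_assoc]
    exact h (i + k) (by omega) (by omega)

theorem isMaxAltSeg_iff (x : Fin n → Fin 2) (i j : ℕ) :
    IsMaxAltSeg (List.ofFn x) i j ↔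
      i ≤ j ∧ j < n ∧ AltOn x i j ∧ (i = 0 ∨ letter x (i - 1) = letter x i) ∧
        (j = n - 1 ∨ letter x j = letter x (j + 1)) := by
  simp only [IsMaxAltSeg, List.length_ofFn]
  refine and_congr_right fun hij => and_congr_right fun hj => ?_
  rw [isAltList_blockSeg_iff x hij hj]
  refine and_congr_right fun halt => and_congr ?_ ?_
  · rcases Nat.eq_zero_or_pos i with hi | hi
    · simp [hi]
    · rw [isAltList_blockSeg_iff x (by omega) hj, altOn_pred_left_iff hi hij]
      simp [hi.ne', halt]
  · rcases (show j + 1 ≤ n by omega).eq_or_lt with hj' | hj'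
    · simp [show j = n - 1 by omega]
    · rw [isAltList_blockSeg_iff x (by omega) hj', altOn_succ_right_iff hij]
      simp [show j ≠ n - 1 by omega, halt]

def segEnds (x : Fin n → Fin 2) : Finset ℕ :=
  (range n).filter fun j => j = n - 1 ∨ letter x j = letter x (j + 1)

theorem mem_segEnds {x : Fin n → Fin 2} {j : ℕ} :
    j ∈ segEnds x ↔ j < n ∧ (j = n - 1 ∨ letter x j = letter x (j + 1)) := by
  rw [segEnds, mem_filter, mem_range]

noncomputable def segStart (x : Fin n → Fin 2) (j : ℕ) : ℕ :=
  Nat.find (p := fun i => AltOn x i j) ⟨j, altOn_self x j⟩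

theorem altOn_segStart (x : Fin n → Fin 2) (j : ℕ) : AltOn x (segStart x j) j :=
  Nat.find_spec (p := fun i => AltOn x i j) _

theorem segStart_le_of_altOn {x : Fin n → Fin 2} {i j : ℕ} (h : AltOn x i j) :
    segStart x j ≤ i :=
  Nat.find_min' _ h

theorem segStart_le (x : Fin n → Fin 2) (j : ℕ) : segStart x j ≤ j :=
  segStart_le_of_altOn (altOn_self x j)

theorem letter_pred_segStart {x : Fin n → Fin 2} {j : ℕ} (h : 0 < segStart x j) :
    letter x (segStart x j - 1) = letter x (segStart x j) := by
  have hnot : ¬ AltOn x (segStart x j - 1) j := Nat.find_min (p := fun i => AltOn x i j) _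
    (show segStart x j - 1 < segStart x j by omega)
  rw [altOn_pred_left_iff h (segStart_le x j)] at hnot
  by_contra hne
  exact hnot ⟨hne, altOn_segStart x j⟩

theorem maxAltSegs_ofFn (x : Fin n → Fin 2) :
    maxAltSegs (List.ofFn x) = (segEnds x).image fun j => (segStart x j, j) := by
  ext ⟨i, j⟩
  simp only [maxAltSegs, mem_filter, mem_product, mem_range,
    mem_image, List.length_ofFn, isMaxAltSeg_iff, mem_segEnds, Prod.mk.injEq]
  constructor
  · rintro ⟨-, hij, hj, halt, hleft, hright⟩
    refine ⟨j, ⟨hj, hright⟩, le_antisymm (segStart_le_of_altOn halt) ?_, rfl⟩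
    by_contra! hlt
    rcases hleft with rfl | heq
    · omega
    · exact altOn_segStart x j (i - 1) (by omega) (by omega)
        (by rwa [Nat.sub_add_cancel (by omega)])
  · rintro ⟨j, ⟨hj, hright⟩, rfl, rfl⟩
    have := segStart_le x j
    exact ⟨⟨by omega, hj⟩, this, hj, altOn_segStart x j,
      (Nat.eq_zero_or_pos _).imp id letter_pred_segStart, hright⟩

theorem numAltSegs_ofFn (x : Fin n → Fin 2) : numAltSegs (List.ofFn x) = (segEnds x).card := by
  rw [numAltSegs, maxAltSegs_ofFn,
    card_image_of_injective _ fun _ _ h => congrArg Prod.snd h]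

def changes (x : Fin n → Fin 2) : Finset ℕ :=
  (range (n - 1)).filter fun t => letter x t ≠ letter x (t + 1)

theorem card_changes_add_numAltSegs (x : Fin n → Fin 2) :
    (changes x).card + numAltSegs (List.ofFn x) = n := by
  rcases Nat.eq_zero_or_pos n with rfl | hn
  · simp [changes, numAltSegs, maxAltSegs]
  have hends : segEnds x =
      insert (n - 1) ((range (n - 1)).filter fun t => ¬ letter x t ≠ letter x (t + 1)) := by
    ext j
    simp only [mem_segEnds, mem_insert, mem_filter, mem_range, not_not]
    omega
  rw [numAltSegs_ofFn, hends, card_insert_of_notMem (by simp), changes, ← add_assoc,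
    card_filter_add_card_filter_not, card_range]
  omega

noncomputable def segment (x : Fin n → Fin 2) (j : ℕ) : Finset ℕ := Icc (segStart x j) j

theorem card_segment (x : Fin n → Fin 2) (j : ℕ) : (segment x j).card = j + 1 - segStart x j :=
  Nat.card_Icc _ _

theorem lt_segStart_of_lt {x : Fin n → Fin 2} {j j' : ℕ} (hj : j ∈ segEnds x)
    (hj' : j' ∈ segEnds x) (hlt : j < j') : j < segStart x j' := by
  by_contra! hle
  obtain ⟨-, hd | hd⟩ := mem_segEnds.mp hj
  · have := (mem_segEnds.mp hj').1; omega
  · exact altOn_segStart x j' j hle hlt hd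

theorem pairwiseDisjoint_segment (x : Fin n → Fin 2) :
    (segEnds x : Set ℕ).PairwiseDisjoint (segment x) := by
  intro j hj j' hj' hne
  rw [Function.onFun, segment, segment, disjoint_left]
  intro k hk hk'
  simp only [mem_Icc] at hk hk'
  rcases Nat.lt_or_gt_of_ne hne with h | h
  · have := lt_segStart_of_lt hj hj' h; omega
  · have := lt_segStart_of_lt hj' hj h; omega

theorem exists_mem_segment (x : Fin n → Fin 2) {k : ℕ} (hk : k < n) :
    ∃ j ∈ segEnds x, k ∈ segment x j := by
  have hne : ((segEnds x).filter (k ≤ ·)).Nonempty :=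
    ⟨n - 1, mem_filter.mpr ⟨mem_segEnds.mpr ⟨by omega, Or.inl rfl⟩, by omega⟩⟩
  obtain ⟨j, hj, hmin⟩ :
      ∃ j ∈ (segEnds x).filter (k ≤ ·), ∀ t ∈ (segEnds x).filter (k ≤ ·), j ≤ t :=
    ⟨_, min'_mem _ hne, fun t ht => min'_le _ t ht⟩
  obtain ⟨hjE, hkj⟩ := mem_filter.mp hj
  refine ⟨j, hjE, mem_Icc.mpr ⟨segStart_le_of_altOn fun t ht ht' hrep => ?_, hkj⟩⟩
  have htE : t ∈ segEnds x :=
    mem_segEnds.mpr ⟨by have := (mem_segEnds.mp hjE).1; omega, Or.inr hrep⟩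
  have := hmin t (mem_filter.mpr ⟨htE, ht⟩)
  omega

theorem lt_of_mem_segment {x : Fin n → Fin 2} {j k : ℕ} (hj : j ∈ segEnds x)
    (hk : k ∈ segment x j) : k < n := by
  have := (mem_segEnds.mp hj).1
  have := (mem_Icc.mp hk).2
  omega

theorem biUnion_segment (x : Fin n → Fin 2) :
    (segEnds x).biUnion (segment x) = range n := by
  ext k
  simp only [mem_biUnion, mem_range]
  exact ⟨fun ⟨j, hj, hk⟩ => lt_of_mem_segment hj hk, exists_mem_segment x⟩

theorem sum_card_segment (x : Fin n → Fin 2) : ∑ j ∈ segEnds x, (segment x j).card = n := by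
  rw [← card_biUnion (pairwiseDisjoint_segment x), biUnion_segment, card_range]

theorem segLenSum_ofFn (x : Fin n → Fin 2) : segLenSum (List.ofFn x) = n := by
  rw [segLenSum, maxAltSegs_ofFn, sum_image fun _ _ _ _ h => congrArg Prod.snd h]
  simp_rw [← card_segment]
  exact sum_card_segment x

noncomputable def altPairs (x : Fin n → Fin 2) : ℕ :=
  ((range n ×ˢ range n).filter fun p => p.1 < p.2 ∧ AltOn x p.1 p.2).card

theorem altOn_iff_exists_segment (x : Fin n → Fin 2) {u v : ℕ} (huv : u ≤ v) (hv : v < n) :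
    AltOn x u v ↔ ∃ j ∈ segEnds x, u ∈ segment x j ∧ v ∈ segment x j := by
  simp only [segment, mem_Icc]
  constructor
  · intro h
    obtain ⟨j, hj, hvj⟩ := exists_mem_segment x hv
    rw [segment, mem_Icc] at hvj
    refine ⟨j, hj, ⟨?_, by omega⟩, hvj⟩
    by_contra! hlt
    have := segStart_le_of_altOn (h.union (altOn_segStart x j) hvj.1)
    omega
  · rintro ⟨j, -, ⟨hu, -⟩, -, hv⟩
    exact (altOn_segStart x j).mono hu hv

theorem filter_lt_altOn_eq_biUnion (x : Fin n → Fin 2) :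
    ((range n ×ˢ range n).filter fun p => p.1 < p.2 ∧ AltOn x p.1 p.2) =
      (segEnds x).biUnion fun j => (segment x j ×ˢ segment x j).filter fun p => p.1 < p.2 := by
  ext ⟨u, v⟩
  simp only [mem_filter, mem_product, mem_range, mem_biUnion]
  constructor
  · rintro ⟨⟨-, hv⟩, huv, halt⟩
    obtain ⟨j, hj, hu, hv⟩ := (altOn_iff_exists_segment x huv.le hv).mp halt
    exact ⟨j, hj, ⟨hu, hv⟩, huv⟩
  · rintro ⟨j, hj, ⟨hu, hv⟩, huv⟩
    have hv' := lt_of_mem_segment hj hv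
    exact ⟨⟨by omega, hv'⟩, huv, (altOn_iff_exists_segment x huv.le hv').mpr ⟨j, hj, hu, hv⟩⟩

theorem two_mul_altPairs_add (x : Fin n → Fin 2) :
    2 * altPairs x + n = segLenSqSum (List.ofFn x) := by
  have hdisj : (segEnds x : Set ℕ).PairwiseDisjoint
      fun j => (segment x j ×ˢ segment x j).filter fun p => p.1 < p.2 := fun j hj j' hj' hne =>
    disjoint_filter_filter
      (disjoint_product.mpr (Or.inl (pairwiseDisjoint_segment x hj hj' hne)))
  rw [altPairs, filter_lt_altOn_eq_biUnion, card_biUnion hdisj, mul_sum, segLenSqSum,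
    maxAltSegs_ofFn, sum_image fun _ _ _ _ h => congrArg Prod.snd h]
  calc _ = ∑ j ∈ segEnds x, (2 * ((segment x j ×ˢ segment x j).filter fun p => p.1 < p.2).card +
        (segment x j).card) := by
        rw [sum_add_distrib, sum_card_segment]
    _ = _ := sum_congr rfl fun j _ => by
        rw [card_product_filter_lt, Nat.two_mul_choose_two_add, card_segment]

/-! ### The FLL `1`-ball -/

theorem mem_fllBall_one_iff {q : ℕ} (x y : Fin n → Fin q) :
    y ∈ fllBall q n 1 x ↔ y = x ∨ ∃ i < n, ∃ j < n,
      (List.ofFn x).eraseIdx i = (List.ofFn y).eraseIdx j := by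
  rw [fllBall, mem_filter, fllDist]
  simp only [mem_univ, true_and]
  have hle := lcsLen_le_length_left (List.ofFn x) (List.ofFn y)
  rw [List.length_ofFn] at hle
  constructor
  · intro h
    obtain ⟨z, hzx, hzy, hz⟩ := exists_sublist_length_eq_lcsLen (List.ofFn x) (List.ofFn y)
    rcases hle.eq_or_lt with heq | hlt
    · left
      exact List.ofFn_injective <|
        (hzy.eq_of_length (by simp [hz, heq])).symm.trans (hzx.eq_of_length (by simp [hz, heq]))
    · right
      obtain ⟨i, hi, hxi⟩ := List.exists_eraseIdx_eq_of_sublist hzx (by simp; omega)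
      obtain ⟨j, hj, hyj⟩ := List.exists_eraseIdx_eq_of_sublist hzy (by simp; omega)
      exact ⟨i, by simpa using hi, j, by simpa using hj, hxi.trans hyj.symm⟩
  · rintro (rfl | ⟨i, hi, j, hj, heq⟩)
    · have := le_lcsLen (List.Sublist.refl (List.ofFn y)) (List.Sublist.refl _)
      simp only [List.length_ofFn] at this
      omega
    · have := le_lcsLen (List.eraseIdx_sublist _ i) (heq ▸ List.eraseIdx_sublist _ j)
      rw [List.length_eraseIdx_of_lt (by simpa using hi), List.length_ofFn] at this
      omega

theorem eraseIdx_ofFn_eq_iff (x y : Fin n → Fin 2) {i j : ℕ} (hi : i < n) (hj : j < n)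
    (hij : i ≤ j) :
    (List.ofFn x).eraseIdx i = (List.ofFn y).eraseIdx j ↔
      (∀ k < i, letter y k = letter x k) ∧ (∀ k, i ≤ k → k < j → letter y k = letter x (k + 1)) ∧
        ∀ k, j < k → k < n → letter y k = letter x k := by
  have getElem_eraseIdx (z : Fin n → Fin 2) (m : ℕ) (hm : m < n) (k : ℕ) (hk : k < n - 1) :
      ((List.ofFn z).eraseIdx m)[k]'(by simp [List.length_eraseIdx_of_lt, hm]; omega) =
        if k < m then letter z k else letter z (k + 1) := by
    rw [List.getElem_eraseIdx]
    split_ifs <;>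
      simp [letter_of_lt z (show k + 1 < n by omega), letter_of_lt z (show k < n by omega)]
  rw [List.ext_getElem_iff]
  simp only [List.length_eraseIdx_of_lt (show i < (List.ofFn x).length by simpa),
    List.length_eraseIdx_of_lt (show j < (List.ofFn y).length by simpa), List.length_ofFn,
    true_and]
  constructor
  · intro h
    have h' : ∀ k < n - 1, (if k < i then letter x k else letter x (k + 1)) =
        if k < j then letter y k else letter y (k + 1) := fun k hk => by
      rw [← getElem_eraseIdx x i hi k hk, ← getElem_eraseIdx y j hj k hk]; exact h k hk hk
    refine ⟨fun k hk => ?_, fun k hk hk' => ?_, fun k hk hk' => ?_⟩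
    · simpa [hk, show k < j by omega] using (h' k (by omega)).symm
    · simpa [hk', show ¬ k < i by omega] using (h' k (by omega)).symm
    · have := h' (k - 1) (by omega)
      simp only [show ¬ k - 1 < i by omega, show ¬ k - 1 < j by omega, if_false,
        Nat.sub_add_cancel (show 1 ≤ k by omega)] at this
      exact this.symm
  · rintro ⟨h₁, h₂, h₃⟩ k hk _
    rw [getElem_eraseIdx x i hi k hk, getElem_eraseIdx y j hj k hk]
    have := h₁ k
    have := h₂ k
    have := h₃ (k + 1)
    split_ifs <;> omega

theorem eq_of_letter_eq {x y : Fin n → Fin 2} (h : ∀ k < n, letter x k = letter y k) : x = y :=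
  funext fun k => by simpa using h k k.isLt

def diffSet (x y : Fin n → Fin 2) : Finset ℕ :=
  (range n).filter fun k => letter y k ≠ letter x k

theorem mem_diffSet {x y : Fin n → Fin 2} {k : ℕ} :
    k ∈ diffSet x y ↔ k < n ∧ letter y k ≠ letter x k := by
  rw [diffSet, mem_filter, mem_range]

theorem diffSet_nonempty_iff {x y : Fin n → Fin 2} : (diffSet x y).Nonempty ↔ y ≠ x := by
  refine ⟨fun ⟨k, hk⟩ h => (mem_diffSet.mp hk).2 (h ▸ rfl), fun h => ?_⟩
  by_contra hne
  exact h (eq_of_letter_eq fun k hk => by_contra fun hd =>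
    hne ⟨k, mem_diffSet.mpr ⟨hk, hd⟩⟩)

noncomputable def diffSpan (x y : Fin n → Fin 2) : ℕ × ℕ :=
  if h : (diffSet x y).Nonempty then ((diffSet x y).min' h, (diffSet x y).max' h) else (n, n)

theorem diffSpan_self (x : Fin n → Fin 2) : diffSpan x x = (n, n) :=
  dif_neg (diffSet_nonempty_iff.not.mpr (not_not.mpr rfl))

theorem diffSpan_eq_iff {x y : Fin n → Fin 2} {i j : ℕ} (hi : i < n) :
    diffSpan x y = (i, j) ↔
      i ∈ diffSet x y ∧ j ∈ diffSet x y ∧ ∀ k ∈ diffSet x y, i ≤ k ∧ k ≤ j := by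
  by_cases hne : (diffSet x y).Nonempty
  · rw [diffSpan, dif_pos hne, Prod.mk.injEq]
    constructor
    · rintro ⟨rfl, rfl⟩
      exact ⟨min'_mem _ _, max'_mem _ _,
        fun k hk => ⟨min'_le _ k hk, le_max' _ k hk⟩⟩
    · rintro ⟨hiD, hjD, hb⟩
      exact ⟨le_antisymm (min'_le _ _ hiD) (le_min' _ _ _ fun k hk => (hb k hk).1),
        le_antisymm (max'_le _ _ _ fun k hk => (hb k hk).2) (le_max' _ _ hjD)⟩
  · rw [diffSpan, dif_neg hne, Prod.mk.injEq]
    exact iff_of_false (fun h => by omega) fun h => hne ⟨i, h.1⟩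

/-- Delete `x_i` and insert the letter `x_j + 1` at position `j`. -/
def shiftLeft (x : Fin n → Fin 2) (i j : ℕ) : Fin n → Fin 2 := fun k =>
  if k < i then x k else if k < j then letter x (k + 1) else if k = j then x k + 1 else x k

/-- Insert the letter `x_i + 1` at position `i` and delete `x_j`. -/
def shiftRight (x : Fin n → Fin 2) (i j : ℕ) : Fin n → Fin 2 := fun k =>
  if k < i then x k else if k = i then x k + 1 else if k ≤ j then letter x (k - 1) else x k

theorem letter_shiftLeft (x : Fin n → Fin 2) (i j : ℕ) {k : ℕ} (hk : k < n) :
    letter (shiftLeft x i j) k = if k < i then letter x k else if k < j then letter x (k + 1)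
      else if k = j then letter x k + 1 else letter x k := by
  simp only [letter_of_lt _ hk, shiftLeft]

theorem letter_shiftRight (x : Fin n → Fin 2) (i j : ℕ) {k : ℕ} (hk : k < n) :
    letter (shiftRight x i j) k = if k < i then letter x k else if k = i then letter x k + 1
      else if k ≤ j then letter x (k - 1) else letter x k := by
  simp only [letter_of_lt _ hk, shiftRight]

theorem shiftLeft_mem_fllBall (x : Fin n → Fin 2) {i j : ℕ} (hij : i ≤ j) (hj : j < n) :
    shiftLeft x i j ∈ fllBall 2 n 1 x := by
  refine (mem_fllBall_one_iff x _).mpr (Or.inr ⟨i, by omega, j, hj, ?_⟩)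
  refine (eraseIdx_ofFn_eq_iff x _ (by omega) hj hij).mpr
    ⟨fun k hk => ?_, fun k hk hk' => ?_, fun k hk hk' => ?_⟩ <;>
  rw [letter_shiftLeft x i j (by omega)] <;> split_ifs <;> first | rfl | omega

theorem shiftRight_mem_fllBall (x : Fin n → Fin 2) {i j : ℕ} (hij : i ≤ j) (hj : j < n) :
    shiftRight x i j ∈ fllBall 2 n 1 x := by
  refine (mem_fllBall_one_iff x _).mpr (Or.inr ⟨j, hj, i, by omega, ?_⟩)
  refine ((eraseIdx_ofFn_eq_iff _ x (by omega) hj hij).mpr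
    ⟨fun k hk => ?_, fun k hk hk' => ?_, fun k hk hk' => ?_⟩).symm <;>
  rw [letter_shiftRight x i j (by omega)] <;> split_ifs <;> first | rfl | omega

theorem diffSpan_shiftLeft (x : Fin n → Fin 2) {i j : ℕ} (hij : i ≤ j) (hj : j < n)
    (h : i = j ∨ letter x i ≠ letter x (i + 1)) : diffSpan x (shiftLeft x i j) = (i, j) := by
  refine (diffSpan_eq_iff (by omega)).mpr ⟨mem_diffSet.mpr ⟨by omega, ?_⟩,
    mem_diffSet.mpr ⟨hj, ?_⟩, fun k hk => ?_⟩
  · rw [letter_shiftLeft x i j (by omega)]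
    split_ifs <;> omega
  · rw [letter_shiftLeft x i j hj]
    split_ifs <;> omega
  · obtain ⟨hk, hne⟩ := mem_diffSet.mp hk
    rw [letter_shiftLeft x i j hk] at hne
    split_ifs at hne <;> omega

theorem diffSpan_shiftRight (x : Fin n → Fin 2) {i j : ℕ} (hij : i ≤ j) (hj : j < n)
    (h : i = j ∨ letter x (j - 1) ≠ letter x j) : diffSpan x (shiftRight x i j) = (i, j) := by
  refine (diffSpan_eq_iff (by omega)).mpr ⟨mem_diffSet.mpr ⟨by omega, ?_⟩,
    mem_diffSet.mpr ⟨hj, ?_⟩, fun k hk => ?_⟩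
  · rw [letter_shiftRight x i j (by omega)]
    split_ifs <;> omega
  · rw [letter_shiftRight x i j hj]
    split_ifs <;> omega
  · obtain ⟨hk, hne⟩ := mem_diffSet.mp hk
    rw [letter_shiftRight x i j hk] at hne
    split_ifs at hne <;> omega

theorem letter_eq_of_diffSpan_eq {x y : Fin n → Fin 2} {i j k : ℕ}
    (hb : ∀ k ∈ diffSet x y, i ≤ k ∧ k ≤ j) (hk : k < n) (hout : k < i ∨ j < k) :
    letter y k = letter x k :=
  by_contra fun hne => by have := hb k (mem_diffSet.mpr ⟨hk, hne⟩); omega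

theorem eq_shiftLeft_of_eraseIdx_eq {x y : Fin n → Fin 2} {i j i₀ j₀ : ℕ} (hi₀ : i₀ < n)
    (hj₀ : j₀ < n) (hle : i₀ ≤ j₀) (heq : (List.ofFn x).eraseIdx i₀ = (List.ofFn y).eraseIdx j₀)
    (hj : j < n) (hij : i ≤ j) (hspan : diffSpan x y = (i, j)) :
    y = shiftLeft x i j ∧ (i = j ∨ letter x i ≠ letter x (i + 1)) := by
  obtain ⟨hiD, hjD, hb⟩ := (diffSpan_eq_iff (by omega)).mp hspan
  have hyi := (mem_diffSet.mp hiD).2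
  have hyj := (mem_diffSet.mp hjD).2
  obtain ⟨c₁, c₂, c₃⟩ := (eraseIdx_ofFn_eq_iff x y hi₀ hj₀ hle).mp heq
  have : i₀ ≤ i := by_contra fun h => hyi (c₁ i (by omega))
  have : j ≤ j₀ := by_contra fun h => hyj (c₃ j (by omega) hj)
  refine ⟨eq_of_letter_eq fun k hk => ?_, ?_⟩
  · rw [letter_shiftLeft x i j hk]
    split_ifs
    · exact letter_eq_of_diffSpan_eq hb hk (by omega)
    · exact c₂ k (by omega) (by omega)
    · subst k; omega
    · exact letter_eq_of_diffSpan_eq hb hk (by omega)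
  · have := c₂ i (by omega)
    omega

theorem eq_shiftRight_of_eraseIdx_eq {x y : Fin n → Fin 2} {i j i₀ j₀ : ℕ} (hi₀ : i₀ < n)
    (hj₀ : j₀ < n) (hle : j₀ ≤ i₀) (heq : (List.ofFn y).eraseIdx j₀ = (List.ofFn x).eraseIdx i₀)
    (hj : j < n) (hij : i ≤ j) (hspan : diffSpan x y = (i, j)) :
    y = shiftRight x i j ∧ (i = j ∨ letter x (j - 1) ≠ letter x j) := by
  obtain ⟨hiD, hjD, hb⟩ := (diffSpan_eq_iff (by omega)).mp hspan
  have hyi := (mem_diffSet.mp hiD).2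
  have hyj := (mem_diffSet.mp hjD).2
  obtain ⟨c₁, c₂, c₃⟩ := (eraseIdx_ofFn_eq_iff y x hj₀ hi₀ hle).mp heq
  have : j₀ ≤ i := by_contra fun h => hyi (c₁ i (by omega)).symm
  have : j ≤ i₀ := by_contra fun h => hyj (c₃ j (by omega) hj).symm
  refine ⟨eq_of_letter_eq fun k hk => ?_, hij.eq_or_lt.imp id fun h => ?_⟩
  · rw [letter_shiftRight x i j hk]
    split_ifs
    · exact letter_eq_of_diffSpan_eq hb hk (by omega)
    · subst k; omega
    · have := c₂ (k - 1) (by omega) (by omega)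
      rwa [Nat.sub_add_cancel (by omega), eq_comm] at this
    · exact letter_eq_of_diffSpan_eq hb hk (by omega)
  · have := c₂ (j - 1) (by omega) (by omega)
    rw [Nat.sub_add_cancel (by omega)] at this
    omega

theorem fllBall_diffSpan_cases {x y : Fin n → Fin 2} {i j : ℕ} (hy : y ∈ fllBall 2 n 1 x)
    (hj : j < n) (hij : i ≤ j) (hspan : diffSpan x y = (i, j)) :
    (y = shiftLeft x i j ∧ (i = j ∨ letter x i ≠ letter x (i + 1))) ∨
      (y = shiftRight x i j ∧ (i = j ∨ letter x (j - 1) ≠ letter x j)) := by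
  rcases (mem_fllBall_one_iff x y).mp hy with rfl | ⟨i₀, hi₀, j₀, hj₀, heq⟩
  · rw [diffSpan_self, Prod.mk.injEq] at hspan
    omega
  rcases le_or_gt i₀ j₀ with hle | hlt
  · exact Or.inl (eq_shiftLeft_of_eraseIdx_eq hi₀ hj₀ hle heq hj hij hspan)
  · exact Or.inr (eq_shiftRight_of_eraseIdx_eq hi₀ hj₀ hlt.le heq.symm hj hij hspan)

theorem mem_fllBall_and_diffSpan_eq_iff (x y : Fin n → Fin 2) {i j : ℕ} (hij : i ≤ j)
    (hj : j < n) :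
    y ∈ fllBall 2 n 1 x ∧ diffSpan x y = (i, j) ↔
      (y = shiftLeft x i j ∧ (i = j ∨ letter x i ≠ letter x (i + 1))) ∨
        (y = shiftRight x i j ∧ (i = j ∨ letter x (j - 1) ≠ letter x j)) := by
  refine ⟨fun ⟨hy, hspan⟩ => fllBall_diffSpan_cases hy hj hij hspan, ?_⟩
  rintro (⟨rfl, h⟩ | ⟨rfl, h⟩)
  · exact ⟨shiftLeft_mem_fllBall x hij hj, diffSpan_shiftLeft x hij hj h⟩
  · exact ⟨shiftRight_mem_fllBall x hij hj, diffSpan_shiftRight x hij hj h⟩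

theorem shiftLeft_eq_shiftRight_iff (x : Fin n → Fin 2) {i j : ℕ} (hij : i ≤ j) (hj : j < n) :
    shiftLeft x i j = shiftRight x i j ↔ AltOn x i j := by
  have key : ∀ k < n, letter (shiftLeft x i j) k = letter (shiftRight x i j) k ↔
      (k < i ∨ j < k ∨ (k = i ∧ k = j) ∨ (k = i ∧ k < j ∧ letter x k ≠ letter x (k + 1)) ∨
        (i < k ∧ k < j ∧ letter x (k + 1) = letter x (k - 1)) ∨
        (i < k ∧ k = j ∧ letter x (k - 1) ≠ letter x k)) := fun k hk => by
    rw [letter_shiftLeft x i j hk, letter_shiftRight x i j hk]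
    split_ifs <;> omega
  constructor
  · intro h k hik hkj
    induction k, hik using Nat.le_induction with
    | base => have := (key i (by omega)).mp (by rw [h]); omega
    | succ k hik ih =>
      have := (key (k + 1) (by omega)).mp (by rw [h])
      have := ih (by omega)
      simp only [Nat.add_sub_cancel] at *
      omega
  · intro h
    refine eq_of_letter_eq fun k hk => (key k hk).mpr ?_
    have h₁ : k < j → i ≤ k → letter x k ≠ letter x (k + 1) := fun h₁ h₂ => h k h₂ h₁
    have h₂ : i < k → k ≤ j → letter x (k - 1) ≠ letter x k := fun h₁ h₂ => by
      simpa [Nat.sub_add_cancel (show 1 ≤ k by omega)] using h (k - 1) (by omega) (by omega)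
    omega

theorem card_fiber_diffSpan_add (x : Fin n → Fin 2) {i j : ℕ} (hij : i ≤ j) (hj : j < n) :
    ((fllBall 2 n 1 x).filter (diffSpan x · = (i, j))).card + (if AltOn x i j then 1 else 0) =
      (if i = j ∨ letter x i ≠ letter x (i + 1) then 1 else 0) +
        (if i = j ∨ letter x (j - 1) ≠ letter x j then 1 else 0) := by
  set L : Finset (Fin n → Fin 2) :=
    if i = j ∨ letter x i ≠ letter x (i + 1) then {shiftLeft x i j} else ∅ with hL
  set R : Finset (Fin n → Fin 2) :=
    if i = j ∨ letter x (j - 1) ≠ letter x j then {shiftRight x i j} else ∅ with hR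
  have hfiber : (fllBall 2 n 1 x).filter (diffSpan x · = (i, j)) = L ∪ R := by
    ext y
    rw [mem_filter, mem_fllBall_and_diffSpan_eq_iff x y hij hj, mem_union, hL, hR]
    split_ifs <;> simp_all
  have hinter : (L ∩ R).card = if AltOn x i j then 1 else 0 := by
    by_cases halt : AltOn x i j
    · have hcL : i = j ∨ letter x i ≠ letter x (i + 1) :=
        hij.eq_or_lt.imp id fun h => halt i le_rfl h
      have hcR : i = j ∨ letter x (j - 1) ≠ letter x j := hij.eq_or_lt.imp id fun h => by
        simpa [Nat.sub_add_cancel (show 1 ≤ j by omega)] using halt (j - 1) (by omega) (by omega)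
      simp [hL, hR, hcL, hcR, halt, (shiftLeft_eq_shiftRight_iff x hij hj).mpr halt]
    · have hne := (shiftLeft_eq_shiftRight_iff x hij hj).not.mpr halt
      rw [hL, hR]
      split_ifs <;> simp [hne]
  rw [hfiber, ← hinter, card_union_add_card_inter, hL, hR]
  split_ifs <;> simp

def spanPairs (n : ℕ) : Finset (ℕ × ℕ) :=
  (range n ×ˢ range n).filter fun p => p.1 ≤ p.2

theorem card_spanPairs_filter (P : ℕ × ℕ → Prop) [DecidablePred P] (hP : ∀ k, P (k, k)) :
    ((spanPairs n).filter P).card =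
      n + ((range n ×ˢ range n).filter fun p => p.1 < p.2 ∧ P p).card := by
  have hsplit : (spanPairs n).filter P =
      (range n).diag ∪ (range n ×ˢ range n).filter fun p => p.1 < p.2 ∧ P p := by
    ext ⟨i, j⟩
    simp only [spanPairs, mem_filter, mem_union, mem_diag, mem_product]
    constructor
    · rintro ⟨⟨h, hij⟩, hp⟩
      exact hij.eq_or_lt.imp (fun e => ⟨h.1, e⟩) fun lt => ⟨h, lt, hp⟩
    · rintro (⟨hi, rfl⟩ | ⟨h, hij, hp⟩)
      · exact ⟨⟨⟨hi, hi⟩, le_rfl⟩, hP i⟩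
      · exact ⟨⟨h, hij.le⟩, hp⟩
  rw [hsplit, card_union_of_disjoint, diag_card, card_range]
  rw [disjoint_left]
  rintro ⟨i, j⟩ h₁ h₂
  simp only [mem_diag, mem_filter] at h₁ h₂
  omega

theorem diffSpan_mem_spanPairs {x y : Fin n → Fin 2} (hy : y ≠ x) :
    diffSpan x y ∈ spanPairs n := by
  have hne := diffSet_nonempty_iff.mpr hy
  have hmax := (mem_diffSet.mp ((diffSet x y).max'_mem hne)).1
  have hle := (diffSet x y).min'_le _ ((diffSet x y).max'_mem hne)
  simp only [diffSpan, dif_pos hne, spanPairs, mem_filter, mem_product,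
    mem_range]
  exact ⟨⟨hle.trans_lt hmax, hmax⟩, hle⟩

theorem card_fllBall_eq (x : Fin n → Fin 2) : (fllBall 2 n 1 x).card =
    1 + ∑ p ∈ spanPairs n, ((fllBall 2 n 1 x).filter (diffSpan x · = p)).card := by
  have hmaps : ((fllBall 2 n 1 x : Finset _) : Set _).MapsTo (diffSpan x)
      ((insert (n, n) (spanPairs n) : Finset _) : Set _) := fun y _ => by
    by_cases hy : y = x
    · simp [hy, diffSpan_self]
    · exact mem_insert_of_mem (diffSpan_mem_spanPairs hy)
  have hcenter : (fllBall 2 n 1 x).filter (diffSpan x · = (n, n)) = {x} := by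
    ext y
    simp only [mem_filter, mem_singleton]
    refine ⟨fun ⟨_, h⟩ => by_contra fun hy => ?_, fun h => ?_⟩
    · have := diffSpan_mem_spanPairs hy
      simp [h, spanPairs] at this
    · subst h; exact ⟨(mem_fllBall_one_iff _ _).mpr (Or.inl rfl), diffSpan_self y⟩
  rw [card_eq_sum_card_fiberwise hmaps, sum_insert (by simp [spanPairs]), hcenter, card_singleton]

theorem card_spanPairs_filter_left_add_right (x : Fin n → Fin 2) :
    ((spanPairs n).filter fun p => p.1 = p.2 ∨ letter x p.1 ≠ letter x (p.1 + 1)).card +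
      ((spanPairs n).filter fun p => p.1 = p.2 ∨ letter x (p.2 - 1) ≠ letter x p.2).card =
      2 * n + (changes x).card * n := by
  have hL : ((range n ×ˢ range n).filter fun p =>
      p.1 < p.2 ∧ (p.1 = p.2 ∨ letter x p.1 ≠ letter x (p.1 + 1))) =
      (range n ×ˢ range n).filter fun p => p.1 < p.2 ∧ p.1 ∈ changes x := by
    refine filter_congr fun p hp => ?_
    simp only [mem_product, mem_range] at hp
    simp only [changes, mem_filter, mem_range]
    omega
  have hR : ((range n ×ˢ range n).filter fun p =>
      p.1 < p.2 ∧ (p.1 = p.2 ∨ letter x (p.2 - 1) ≠ letter x p.2)) =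
      (range n ×ˢ range n).filter fun p => p.1 < p.2 ∧ p.2 - 1 ∈ changes x := by
    refine filter_congr fun p hp => ?_
    simp only [mem_product, mem_range] at hp
    simp only [changes, mem_filter, mem_range]
    constructor
    · rintro ⟨h, h'⟩; exact ⟨h, by omega, by rw [Nat.sub_add_cancel (by omega)]; omega⟩
    · rintro ⟨h, -, h'⟩; rw [Nat.sub_add_cancel (by omega)] at h'; omega
  rw [card_spanPairs_filter _ fun k => Or.inl rfl, card_spanPairs_filter _ fun k => Or.inl rfl,
    hL, hR, ← card_lt_fst_mem_add_card_lt_pred_snd_mem fun t ht => ?_]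
  · ring
  · have := (mem_filter.mp ht).1
    rw [mem_range] at this
    omega

theorem card_fllBall_add_altPairs (x : Fin n → Fin 2) :
    (fllBall 2 n 1 x).card + altPairs x = 1 + n + n * (changes x).card := by
  have hfibers : ∑ p ∈ spanPairs n, (((fllBall 2 n 1 x).filter (diffSpan x · = p)).card +
      if AltOn x p.1 p.2 then 1 else 0) =
      ∑ p ∈ spanPairs n, ((if p.1 = p.2 ∨ letter x p.1 ≠ letter x (p.1 + 1) then 1 else 0) +
        if p.1 = p.2 ∨ letter x (p.2 - 1) ≠ letter x p.2 then 1 else 0) := by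
    refine sum_congr rfl fun ⟨i, j⟩ hp => ?_
    simp only [spanPairs, mem_filter, mem_product, mem_range] at hp
    exact card_fiber_diffSpan_add x hp.2 hp.1.2
  rw [sum_add_distrib, sum_add_distrib, ← card_filter, ← card_filter, ← card_filter,
    card_spanPairs_filter_left_add_right, card_spanPairs_filter _ fun k => altOn_self x k,
    ← altPairs] at hfibers
  rw [card_fllBall_eq]
  linarith

/-! ### Words with prescribed segments -/

def wordOfRepeats (n : ℕ) (R : Finset ℕ) : Fin n → Fin 2 := fun t =>
  ⟨(t + ∑ s ∈ range t, if s ∈ R then 1 else 0) % 2, Nat.mod_lt _ two_pos⟩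

theorem letter_wordOfRepeats_eq_iff (R : Finset ℕ) {t : ℕ} (ht : t + 1 < n) :
    letter (wordOfRepeats n R) t = letter (wordOfRepeats n R) (t + 1) ↔ t ∈ R := by
  simp only [letter_of_lt _ ht, letter_of_lt _ (show t < n by omega), wordOfRepeats,
    Fin.ext_iff, sum_range_succ]
  split_ifs with h <;> simp only [h, iff_true, iff_false] <;> omega

theorem segEnds_wordOfRepeats (hn : 0 < n) {R : Finset ℕ} (hR : ∀ t ∈ R, t + 1 < n) :
    segEnds (wordOfRepeats n R) = insert (n - 1) R := by
  ext j
  rw [mem_segEnds, mem_insert]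
  by_cases hj : j + 1 < n
  · rw [letter_wordOfRepeats_eq_iff R hj]
    simp [show j < n by omega]
  · have hjR : j ∉ R := fun h => hj (hR j h)
    simp only [hjR, or_false]
    exact ⟨fun h => by omega, fun h => ⟨by omega, Or.inl h⟩⟩

theorem segStart_wordOfRepeats {R : Finset ℕ} {i j : ℕ} (hj : j < n) (hij : i ≤ j)
    (hstart : i = 0 ∨ i - 1 ∈ R) (hgap : ∀ t ∈ R, t < i ∨ j ≤ t) :
    segStart (wordOfRepeats n R) j = i := by
  refine le_antisymm (segStart_le_of_altOn fun t ht ht' hrep => ?_) (by_contra fun hgt => ?_)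
  · have := hgap t ((letter_wordOfRepeats_eq_iff R (by omega)).mp hrep)
    omega
  · have hR : i - 1 ∈ R := hstart.resolve_left (by omega)
    have hrep := (letter_wordOfRepeats_eq_iff R (show i - 1 + 1 < n by omega)).mpr hR
    exact altOn_segStart _ j (i - 1) (by omega) (by omega) hrep

theorem exists_maxAltSegs_eq {a : ℕ} {c : ℕ → ℕ} (ha : 0 < a) (hc0 : c 0 = 0) (hca : c a = n)
    (hc : StrictMonoOn c (Set.Iic a)) :
    ∃ w : Fin n → Fin 2,
      maxAltSegs (List.ofFn w) = (Icc 1 a).image fun k => (c (k - 1), c k - 1) := by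
  have hlt : ∀ {k m}, k ≤ a → m ≤ a → (c k < c m ↔ k < m) := fun hk hm =>
    hc.lt_iff_lt (Set.mem_Iic.mpr hk) (Set.mem_Iic.mpr hm)
  have hle : ∀ {k m}, k ≤ a → m ≤ a → (c k ≤ c m ↔ k ≤ m) := fun hk hm =>
    hc.le_iff_le (Set.mem_Iic.mpr hk) (Set.mem_Iic.mpr hm)
  set R := (Ioo 0 a).image (c · - 1) with hRdef
  have hR : ∀ t ∈ R, t + 1 < n := by
    simp only [hRdef, mem_image, mem_Ioo]
    rintro t ⟨k, ⟨hk, hka⟩, rfl⟩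
    have h0 := (hlt (Nat.zero_le a) hka.le).mpr hk
    have h1 := (hlt hka.le le_rfl).mpr hka
    omega
  have hn : 0 < n := hca ▸ hc0 ▸ (hlt (Nat.zero_le a) le_rfl).mpr ha
  have hIcc : Icc 1 a = insert a (Ioo 0 a) := by
    ext k; simp only [mem_Icc, mem_insert, mem_Ioo]; omega
  have hends : insert (n - 1) R = (Icc 1 a).image (c · - 1) := by
    rw [hIcc, image_insert, hca]
  refine ⟨wordOfRepeats n R, ?_⟩
  rw [maxAltSegs_ofFn, segEnds_wordOfRepeats hn hR, hends, image_image]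
  refine image_congr fun k hk => ?_
  rw [coe_Icc, Set.mem_Icc] at hk
  show (segStart _ (c k - 1), c k - 1) = (c (k - 1), c k - 1)
  have h0 := (hlt (Nat.zero_le a) hk.2).mpr (by omega)
  have h1 := (hlt (show k - 1 ≤ a by omega) hk.2).mpr (by omega)
  have h2 := (hle hk.2 le_rfl).mpr hk.2
  refine Prod.ext (segStart_wordOfRepeats (by omega) (by omega) ?_ fun t ht => ?_) rfl
  · rcases Nat.eq_zero_or_pos (k - 1) with h | h
    · exact Or.inl (h ▸ hc0)
    · exact Or.inr (mem_image.mpr ⟨k - 1, mem_Ioo.mpr ⟨h, by omega⟩, rfl⟩)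
  · obtain ⟨m, hm, rfl⟩ := mem_image.mp ht
    rw [mem_Ioo] at hm
    have := (hlt (Nat.zero_le a) hm.2.le).mpr hm.1
    rcases Nat.lt_or_ge m k with hmk | hmk
    · have := (hle hm.2.le (show k - 1 ≤ a by omega)).mpr (show m ≤ k - 1 by omega)
      omega
    · have := (hle hk.2 hm.2.le).mpr hmk
      omega

theorem exists_isBalanced {a : ℕ} (ha : 0 < a) (han : a ≤ n) :
    ∃ w : Fin n → Fin 2, IsBalanced n a w := by
  set q := (n + a - 1) / a with hq
  have hdiv := Nat.div_add_mod (n + a - 1) a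
  have hmod := Nat.mod_lt (n + a - 1) ha
  have hq1 : 1 ≤ q := (Nat.one_le_div_iff ha).mpr (by omega)
  have hsub : a * (q - 1) = a * q - a := Nat.mul_sub_one a q
  have hlo : a * (q - 1) < n := by rw [← hq] at hdiv; omega
  have hhi : n ≤ a * q := by rw [← hq] at hdiv; omega
  set r := n - a * (q - 1) with hr
  -- segment `k` has length `q` for `k ≤ r` and `q - 1` beyond
  set c : ℕ → ℕ := fun k => k * (q - 1) + min k r with hc
  have hstep : ∀ k, c (k + 1) = c k + (q - 1) + (min (k + 1) r - min k r) := fun k => by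
    simp only [hc, Nat.succ_mul]; omega
  have hmono : StrictMonoOn c (Set.Iic a) := strictMonoOn_Iic_of_lt_succ fun k hk => by
    rw [Order.succ_eq_add_one, hstep]
    rcases hq1.eq_or_lt with h | h
    · rw [← h, Nat.sub_self, Nat.mul_zero] at hr
      omega
    · omega
  have hc0 : c 0 = 0 := by simp [hc]
  obtain ⟨w, hw⟩ := exists_maxAltSegs_eq (n := n) ha hc0 (by simp only [hc]; omega) hmono
  refine ⟨w, ?_, fun p hp => ?_⟩
  · rw [numAltSegs, hw, card_image_of_injOn, Nat.card_Icc, Nat.add_sub_cancel]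
    intro k hk m hm hkm
    simp only [coe_Icc, Set.mem_Icc, Prod.mk.injEq] at hk hm hkm
    have hk0 := hmono (Set.mem_Iic.mpr (Nat.zero_le a)) (Set.mem_Iic.mpr hk.2) hk.1
    have hm0 := hmono (Set.mem_Iic.mpr (Nat.zero_le a)) (Set.mem_Iic.mpr hm.2) hm.1
    exact hmono.injOn (Set.mem_Iic.mpr hk.2) (Set.mem_Iic.mpr hm.2) (by omega)
  · obtain ⟨k, hk, rfl⟩ := mem_image.mp (hw ▸ hp)
    rw [mem_Icc] at hk
    have := hstep (k - 1)
    rw [Nat.sub_add_cancel hk.1] at this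
    dsimp only
    omega

/-! ### Ball size against segment lengths -/

theorem two_mul_card_fllBall_add_segLenSqSum (x : Fin n → Fin 2) :
    2 * (fllBall 2 n 1 x).card + segLenSqSum (List.ofFn x) =
      2 + 3 * n + 2 * n * (n - numAltSegs (List.ofFn x)) := by
  have hball := card_fllBall_add_altPairs x
  have hpairs := two_mul_altPairs_add x
  have hchanges : n - numAltSegs (List.ofFn x) = (changes x).card := by
    have := card_changes_add_numAltSegs x; omega
  rw [hchanges]
  linarith

theorem sum_intCast_segLen_ofFn (x : Fin n → Fin 2) :
    ∑ p ∈ maxAltSegs (List.ofFn x), ((p.2 + 1 - p.1 : ℕ) : ℤ) = n := by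
  exact_mod_cast segLenSum_ofFn x

theorem le_segLenSqSum_ofFn (x : Fin n → Fin 2) (q : ℤ) :
    (2 * q - 1) * n - numAltSegs (List.ofFn x) * (q * (q - 1)) ≤ segLenSqSum (List.ofFn x) := by
  have := le_sum_sq (maxAltSegs (List.ofFn x)) (fun p => ((p.2 + 1 - p.1 : ℕ) : ℤ)) q
  rw [sum_intCast_segLen_ofFn] at this
  rw [segLenSqSum, numAltSegs]
  push_cast
  exact this

theorem segLenSqSum_ofFn_eq_iff (x : Fin n → Fin 2) {q : ℕ} (hq : 1 ≤ q) :
    (segLenSqSum (List.ofFn x) : ℤ) =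
        (2 * q - 1) * n - numAltSegs (List.ofFn x) * ((q : ℤ) * (q - 1)) ↔
      ∀ p ∈ maxAltSegs (List.ofFn x), p.2 + 1 - p.1 = q ∨ p.2 + 1 - p.1 = q - 1 := by
  have := sum_sq_eq_iff (maxAltSegs (List.ofFn x)) (fun p => ((p.2 + 1 - p.1 : ℕ) : ℤ)) q
  rw [sum_intCast_segLen_ofFn] at this
  rw [segLenSqSum, numAltSegs]
  push_cast
  rw [this]
  refine forall₂_congr fun p _ => ?_
  omega

theorem card_fllBall_le_card_fllBall_iff {x y : Fin n → Fin 2}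
    (h : numAltSegs (List.ofFn y) = numAltSegs (List.ofFn x)) :
    (fllBall 2 n 1 y).card ≤ (fllBall 2 n 1 x).card ↔
      segLenSqSum (List.ofFn x) ≤ segLenSqSum (List.ofFn y) := by
  have hx := two_mul_card_fllBall_add_segLenSqSum x
  have hy := two_mul_card_fllBall_add_segLenSqSum y
  rw [h] at hy
  omega

end FLL

theorem max_fll_ball_fixed_numAltSegs_general (n a : ℕ) (ha1 : 1 ≤ a) (han : a ≤ n)
    (x : Fin n → Fin 2) (hx : numAltSegs (List.ofFn x) = a) :
    (∀ y : Fin n → Fin 2, numAltSegs (List.ofFn y) = a →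
        (fllBall 2 n 1 y).card ≤ (fllBall 2 n 1 x).card) ↔ IsBalanced n a x := by
  have hq : 1 ≤ (n + a - 1) / a := (Nat.one_le_div_iff ha1).mpr (by omega)
  have hlow := fun y : Fin n → Fin 2 => FLL.le_segLenSqSum_ofFn y ((n + a - 1) / a : ℕ)
  obtain ⟨w, hwA, hw⟩ := FLL.exists_isBalanced ha1 han
  rw [← FLL.segLenSqSum_ofFn_eq_iff w hq, hwA] at hw
  rw [IsBalanced, ← FLL.segLenSqSum_ofFn_eq_iff x hq, hx, and_iff_right rfl]
  constructor
  · intro hmax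
    have := (FLL.card_fllBall_le_card_fllBall_iff (hwA.trans hx.symm)).mp (hmax w hwA)
    have := hlow x
    rw [hx] at this
    omega
  · intro hxmin y hy
    refine (FLL.card_fllBall_le_card_fllBall_iff (hy.trans hx.symm)).mpr ?_
    have := hlow y
    rw [hy] at this
    omega

/-- For `1 ≤ a ≤ n`, among binary sequences with `A(y) = a`, the FLL
`1`-ball size is maximal exactly at the `a`-balanced sequences. -/
theorem max_fll_ball_fixed_numAltSegs (n a : ℕ) (hn : 1 ≤ n) (ha1 : 1 ≤ a) (han : a ≤ n)
    (x : Fin n → Fin 2) (hx : numAltSegs (List.ofFn x) = a) :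
    (∀ y : Fin n → Fin 2, numAltSegs (List.ofFn y) = a →
        (fllBall 2 n 1 y).card ≤ (fllBall 2 n 1 x).card) ↔ IsBalanced n a x :=
  max_fll_ball_fixed_numAltSegs_general n a ha1 han x hx
end

section
/- Let n ≥ 1 and 1 ≤ α ≤ n be integers, and let x ∈ Z_2^n be an α-balanced sequence. Then |L_1(x)| = (n+1−α)(n−1) + 2 − (k/2)(⌈n/α⌉−1)(⌈n/α⌉−2) − ((α−k)/2)(⌈n/α⌉−2)(⌈n/α⌉−3), where k is the unique integer with 1 ≤ k ≤ α and k ≡ n (mod α). -/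
/-!
A word `y ≠ x` lies in `L₁(x)` iff it arises from `x` by deleting one symbol and inserting
another. Shrinking the window between the deletion and the insertion until `y` differs from `x`
at both of its ends `i ≤ j`, `y` is either the left shift `x_{i+1} ⋯ x_j (x_j + 1)`, available
when `i = j` or `x_i ≠ x_{i+1}`, or the right shift `(x_i + 1) x_i ⋯ x_{j-1}`, available when
`x_{j-1} ≠ x_j`. The window is determined by `y`, and the two shifts on it coincide exactly when
`x_i ⋯ x_j` is alternating. Counting windows gives
`|L₁(x)| = n (n - A(x)) + n + 1 - ∑ C(s_i, 2)`: the positions `t` with `x_t ≠ x_{t+1}` number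
`n - A(x)`, and the alternating windows with `i < j` are the pairs inside a single maximal
alternating segment. In an `α`-balanced word exactly `k` segments have length `⌈n/α⌉`.
-/

open scoped Classical

open Finset

namespace FLLBall

variable {n : ℕ}

lemma fin_two_eq_add_one_of_ne {a b : Fin 2} (h : a ≠ b) : a = b + 1 := by revert a b; decide

lemma fin_two_eq_of_ne_of_ne {a b c : Fin 2} (h₁ : a ≠ b) (h₂ : b ≠ c) : a = c := by
  revert a b c; decide

lemma fin_two_add_one_ne (a : Fin 2) : a + 1 ≠ a := by revert a; decide

lemma exists_eraseIdx_eq_of_sublist {α : Type*} {z l : List α} (h : z.Sublist l)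
    (hl : z.length + 1 = l.length) : ∃ i < l.length, l.eraseIdx i = z := by
  induction h with
  | slnil => simp at hl
  | cons a h _ => exact ⟨0, by simp, (h.eq_of_length (by simpa using hl)).symm⟩
  | cons_cons a _ ih =>
    obtain ⟨i, hi, he⟩ := ih (by simpa using hl)
    exact ⟨i + 1, by simpa using hi, by rw [List.eraseIdx_cons_succ, he]⟩

lemma fllDist_le_one_iff {q : ℕ} (hn : 1 ≤ n) (x y : Fin n → Fin q) :
    fllDist x y ≤ 1 ↔
      ∃ i < n, ∃ j < n, (List.ofFn x).eraseIdx i = (List.ofFn y).eraseIdx j := by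
  unfold fllDist lcsLen
  set S := {k | ∃ z : List (Fin q), z.Sublist (List.ofFn x) ∧ z.Sublist (List.ofFn y) ∧
    z.length = k}
  have hS : BddAbove S := ⟨n, fun _ ⟨z, hz, _, hk⟩ => hk ▸ by simpa using hz.length_le⟩
  constructor
  · intro h
    obtain ⟨z, hzx, hzy, hz⟩ : sSup S ∈ S :=
      Nat.sSup_mem ⟨0, [], List.nil_sublist _, List.nil_sublist _, rfl⟩ hS
    have hzn : z.length ≤ n := by simpa using hzx.length_le
    by_cases hlen : z.length = n
    · have hxy : List.ofFn x = List.ofFn y :=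
        (hzx.eq_of_length (by simpa using hlen)).symm.trans (hzy.eq_of_length (by simpa using hlen))
      exact ⟨0, hn, 0, hn, by rw [hxy]⟩
    · obtain ⟨i, hi, hx⟩ := exists_eraseIdx_eq_of_sublist hzx (by simp; omega)
      obtain ⟨j, hj, hy⟩ := exists_eraseIdx_eq_of_sublist hzy (by simp; omega)
      exact ⟨i, by simpa using hi, j, by simpa using hj, hx.trans hy.symm⟩
  · rintro ⟨i, hi, j, -, h⟩
    have : n - 1 ≤ sSup S := le_csSup hS
      ⟨_, List.eraseIdx_sublist _ i, h ▸ List.eraseIdx_sublist _ j,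
        by simp [List.length_eraseIdx, hi]⟩
    omega

/-- Padding by `0` lets index conditions on `seq x` go without bound proofs. -/
def seq (x : Fin n → Fin 2) (t : ℕ) : Fin 2 := if h : t < n then x ⟨t, h⟩ else 0

lemma seq_of_lt (x : Fin n → Fin 2) {t : ℕ} (h : t < n) : seq x t = x ⟨t, h⟩ := dif_pos h

lemma seq_of_le (x : Fin n → Fin 2) {t : ℕ} (h : n ≤ t) : seq x t = 0 := dif_neg (by omega)

lemma getElem_ofFn_eq_seq (x : Fin n → Fin 2) {t : ℕ} (h : t < (List.ofFn x).length) :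
    (List.ofFn x)[t] = seq x t := by
  rw [List.getElem_ofFn, seq_of_lt]

lemma eq_of_seq_eq {x y : Fin n → Fin 2} (h : ∀ t < n, seq x t = seq y t) : x = y := by
  funext t
  simpa only [seq_of_lt _ t.isLt] using h t t.isLt

/-- `y` is obtained from `x` by deleting `x i` and inserting a symbol at position `j`. -/
def IsShift (x y : Fin n → Fin 2) (i j : ℕ) : Prop :=
  (∀ t < i, seq y t = seq x t) ∧ (∀ t, i ≤ t → t < j → seq y t = seq x (t + 1)) ∧
    ∀ t, j < t → seq y t = seq x t

lemma eraseIdx_ofFn_eq_iff {x y : Fin n → Fin 2} {i j : ℕ} (hij : i ≤ j) (hj : j < n) :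
    (List.ofFn x).eraseIdx i = (List.ofFn y).eraseIdx j ↔ IsShift x y i j := by
  have hlen : ∀ {z : Fin n → Fin 2} {k}, k < n → ((List.ofFn z).eraseIdx k).length = n - 1 :=
    fun hk => by simp [List.length_eraseIdx, hk]
  have get : ∀ (z : Fin n → Fin 2) (k t) (hk : k < n) (ht : t < n - 1),
      ((List.ofFn z).eraseIdx k)[t]'(by rw [hlen hk]; exact ht) =
        if t < k then seq z t else seq z (t + 1) := by
    intro z k t hk ht
    split_ifs with h
    · rw [List.getElem_eraseIdx_of_lt _ h, getElem_ofFn_eq_seq]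
    · rw [List.getElem_eraseIdx_of_ge _ (by omega), getElem_ofFn_eq_seq]
  constructor
  · intro h
    have e : ∀ t (ht : t < n - 1), (if t < i then seq x t else seq x (t + 1)) =
        if t < j then seq y t else seq y (t + 1) := fun t ht => by
      rw [← get x i t (by omega) ht, ← get y j t hj ht]; simp only [h]
    refine ⟨fun t ht => ?_, fun t h₁ h₂ => ?_, fun t ht => ?_⟩
    · simpa [ht, show t < j by omega] using (e t (by omega)).symm
    · simpa [h₂, show ¬ t < i by omega] using (e t (by omega)).symm
    · rcases lt_or_ge t n with htn | htn
      · obtain ⟨s, rfl⟩ : ∃ s, t = s + 1 := ⟨t - 1, by omega⟩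
        simpa [show ¬ s < i by omega, show ¬ s < j by omega] using (e s (by omega)).symm
      · rw [seq_of_le _ htn, seq_of_le _ htn]
  · rintro ⟨h₁, h₂, h₃⟩
    refine List.ext_getElem (by rw [hlen (by omega), hlen hj]) fun t ht _ => ?_
    rw [hlen (by omega)] at ht
    rw [get x i t (by omega) ht, get y j t hj ht]
    split_ifs with hi hj' hj'
    · exact (h₁ t hi).symm
    · omega
    · exact (h₂ t (by omega) hj').symm
    · exact (h₃ (t + 1) (by omega)).symm

lemma mem_fllBall_one_iff (hn : 1 ≤ n) {x y : Fin n → Fin 2} :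
    y ∈ fllBall 2 n 1 x ↔ ∃ i j, i ≤ j ∧ j < n ∧ (IsShift x y i j ∨ IsShift y x i j) := by
  simp only [fllBall, mem_filter, mem_univ, true_and, fllDist_le_one_iff hn]
  constructor
  · rintro ⟨i, hi, j, hj, h⟩
    rcases le_total i j with hij | hji
    · exact ⟨i, j, hij, hj, .inl ((eraseIdx_ofFn_eq_iff hij hj).mp h)⟩
    · exact ⟨j, i, hji, hi, .inr ((eraseIdx_ofFn_eq_iff hji hi).mp h.symm)⟩
  · rintro ⟨i, j, hij, hj, h | h⟩
    · exact ⟨i, by omega, j, hj, (eraseIdx_ofFn_eq_iff hij hj).mpr h⟩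
    · exact ⟨j, hj, i, by omega, ((eraseIdx_ofFn_eq_iff hij hj).mpr h).symm⟩

def changes (x : Fin n → Fin 2) : Finset ℕ := {i ∈ range (n - 1) | seq x i ≠ seq x (i + 1)}

lemma mem_changes {x : Fin n → Fin 2} {i : ℕ} :
    i ∈ changes x ↔ i + 1 < n ∧ seq x i ≠ seq x (i + 1) := by
  simp only [changes, mem_filter, mem_range]
  omega

def IsAltWindow (x : Fin n → Fin 2) (i j : ℕ) : Prop :=
  ∀ t, i ≤ t → t < j → seq x t ≠ seq x (t + 1)

def shiftL (x : Fin n → Fin 2) (i j : ℕ) : Fin n → Fin 2 := fun t =>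
  if (t : ℕ) < i ∨ j < t then x t else if (t : ℕ) = j then x t + 1 else seq x (t + 1)

def shiftR (x : Fin n → Fin 2) (i j : ℕ) : Fin n → Fin 2 := fun t =>
  if (t : ℕ) < i ∨ j < t then x t else if (t : ℕ) = i then x t + 1 else seq x (t - 1)

section Shifts

variable {x : Fin n → Fin 2} {i j t : ℕ}

lemma seq_shiftL (ht : t < n) : seq (shiftL x i j) t =
    if t < i ∨ j < t then seq x t else if t = j then seq x t + 1 else seq x (t + 1) := by
  simp [seq, shiftL, ht]

lemma seq_shiftR (ht : t < n) : seq (shiftR x i j) t =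
    if t < i ∨ j < t then seq x t else if t = i then seq x t + 1 else seq x (t - 1) := by
  simp [seq, shiftR, ht]

lemma isShift_shiftL : IsShift x (shiftL x i j) i j := by
  refine ⟨fun t ht => ?_, fun t h₁ h₂ => ?_, fun t ht => ?_⟩ <;>
    rcases lt_or_ge t n with htn | htn <;>
    simp only [seq_shiftL, seq_of_le _ htn, seq_of_le _ (Nat.le_succ_of_le htn), htn]
  · rw [if_pos (.inl ht)]
  · rw [if_neg (by omega), if_neg (by omega)]
  · rw [if_pos (.inr ht)]

lemma isShift_shiftR (hj : j < n) : IsShift (shiftR x i j) x i j := by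
  refine ⟨fun t ht => ?_, fun t h₁ h₂ => ?_, fun t ht => ?_⟩
  · rcases lt_or_ge t n with htn | htn
    · rw [seq_shiftR htn, if_pos (.inl ht)]
    · rw [seq_of_le _ htn, seq_of_le _ htn]
  · rw [seq_shiftR (by omega), if_neg (by omega), if_neg (by omega), Nat.add_sub_cancel]
  · rcases lt_or_ge t n with htn | htn
    · rw [seq_shiftR htn, if_pos (.inr ht)]
    · rw [seq_of_le _ htn, seq_of_le _ htn]

end Shifts

def leftWindows (x : Fin n → Fin 2) : Finset (ℕ × ℕ) :=
  {p ∈ range n ×ˢ range n | p.1 = p.2 ∨ p.1 < p.2 ∧ p.1 ∈ changes x}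

def rightWindows (x : Fin n → Fin 2) : Finset (ℕ × ℕ) :=
  {p ∈ range n ×ˢ range n | p.1 < p.2 ∧ p.2 - 1 ∈ changes x}

def leftShifts (x : Fin n → Fin 2) : Finset (Fin n → Fin 2) :=
  (leftWindows x).image fun p => shiftL x p.1 p.2

def rightShifts (x : Fin n → Fin 2) : Finset (Fin n → Fin 2) :=
  (rightWindows x).image fun p => shiftR x p.1 p.2

section NormalForm

variable {x y : Fin n → Fin 2}

lemma eq_or_mem_leftShifts_of_forall_ne {i : ℕ} (hi : i < n) (h : ∀ t ≠ i, seq y t = seq x t) :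
    y = x ∨ y ∈ leftShifts x := by
  by_cases hyi : seq y i = seq x i
  · exact .inl (eq_of_seq_eq fun t _ => by rcases eq_or_ne t i with rfl | ht <;> simp [*])
  refine .inr (mem_image.mpr ⟨(i, i), by simp [leftWindows, hi], eq_of_seq_eq fun t ht => ?_⟩)
  rw [seq_shiftL ht]
  split_ifs with h₁ h₂
  · exact (h t (by omega)).symm
  · subst h₂; exact (fin_two_eq_add_one_of_ne hyi).symm
  · omega

/-- Shrink the window, from the left while `x i = x (i + 1)` and from the right while
`y j = x j`; once neither applies, `y` is the left shift on it. -/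
lemma IsShift.eq_or_mem_leftShifts {i j : ℕ} (h : IsShift x y i j) (hij : i ≤ j) (hj : j < n) :
    y = x ∨ y ∈ leftShifts x := by
  obtain ⟨hlt, hmid, hgt⟩ := h
  obtain rfl | hij := hij.eq_or_lt
  · exact eq_or_mem_leftShifts_of_forall_ne hj fun t ht => by
      rcases Nat.lt_or_gt_of_ne ht with ht | ht
      exacts [hlt t ht, hgt t ht]
  by_cases hxi : seq x i = seq x (i + 1)
  · refine IsShift.eq_or_mem_leftShifts (i := i + 1)
      ⟨fun t ht => ?_, fun t h₁ h₂ => hmid t (by omega) h₂, hgt⟩ hij hj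
    rcases (Nat.lt_succ_iff.mp ht).lt_or_eq with ht | rfl
    exacts [hlt t ht, (hmid t le_rfl hij).trans hxi.symm]
  by_cases hyj : seq y j = seq x j
  · refine IsShift.eq_or_mem_leftShifts (j := j - 1)
      ⟨hlt, fun t h₁ h₂ => hmid t h₁ (by omega), fun t ht => ?_⟩ (by omega) (by omega)
    rcases (show j ≤ t by omega).eq_or_lt with rfl | ht
    exacts [hyj, hgt t ht]
  refine .inr (mem_image.mpr ⟨(i, j), ?_, eq_of_seq_eq fun t ht => ?_⟩)
  · simp only [leftWindows, mem_filter, mem_product, mem_range, mem_changes]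
    exact ⟨⟨by omega, hj⟩, .inr ⟨hij, by omega, hxi⟩⟩
  rw [seq_shiftL ht]
  split_ifs with h₁ h₂
  · rcases h₁ with h₁ | h₁
    exacts [(hlt t h₁).symm, (hgt t h₁).symm]
  · subst h₂; exact (fin_two_eq_add_one_of_ne hyj).symm
  · exact (hmid t (by omega) (by omega)).symm
termination_by j - i

/-- The same shrinking, with the roles of the two ends exchanged. -/
lemma IsShift.eq_or_mem_shifts {i j : ℕ} (h : IsShift y x i j) (hij : i ≤ j) (hj : j < n) :
    y = x ∨ y ∈ leftShifts x ∨ y ∈ rightShifts x := by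
  obtain ⟨hlt, hmid, hgt⟩ := h
  obtain rfl | hij := hij.eq_or_lt
  · exact (eq_or_mem_leftShifts_of_forall_ne hj fun t ht => by
      rcases Nat.lt_or_gt_of_ne ht with ht | ht
      exacts [(hlt t ht).symm, (hgt t ht).symm]).imp_right .inl
  by_cases hxj : seq x (j - 1) = seq x j
  · refine IsShift.eq_or_mem_shifts (j := j - 1)
      ⟨hlt, fun t h₁ h₂ => hmid t h₁ (by omega), fun t ht => ?_⟩ (by omega) (by omega)
    rcases (show j ≤ t by omega).eq_or_lt with rfl | ht
    · rw [← hxj, hmid (j - 1) (by omega) (by omega), Nat.sub_add_cancel (by omega)]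
    · exact hgt t ht
  by_cases hyi : seq y i = seq x i
  · refine IsShift.eq_or_mem_shifts (i := i + 1)
      ⟨fun t ht => ?_, fun t h₁ h₂ => hmid t (by omega) h₂, hgt⟩ hij hj
    rcases (Nat.lt_succ_iff.mp ht).lt_or_eq with ht | rfl
    exacts [hlt t ht, hyi.symm]
  refine .inr (.inr (mem_image.mpr ⟨(i, j), ?_, eq_of_seq_eq fun t ht => ?_⟩))
  · simp only [rightWindows, mem_filter, mem_product, mem_range, mem_changes]
    refine ⟨⟨by omega, hj⟩, hij, by omega, ?_⟩
    rwa [Nat.sub_add_cancel (by omega)]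
  rw [seq_shiftR ht]
  split_ifs with h₁ h₂
  · rcases h₁ with h₁ | h₁
    exacts [hlt t h₁, hgt t h₁]
  · subst h₂; exact (fin_two_eq_add_one_of_ne hyi).symm
  · rw [hmid (t - 1) (by omega) (by omega), Nat.sub_add_cancel (by omega)]
termination_by j - i

end NormalForm

lemma fllBall_two_one_eq (hn : 1 ≤ n) (x : Fin n → Fin 2) :
    fllBall 2 n 1 x = insert x (leftShifts x ∪ rightShifts x) := by
  ext y
  rw [mem_fllBall_one_iff hn, mem_insert, mem_union]
  constructor
  · rintro ⟨i, j, hij, hj, h | h⟩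
    · exact (h.eq_or_mem_leftShifts hij hj).imp_right .inl
    · exact h.eq_or_mem_shifts hij hj
  · rintro (rfl | hy | hy)
    · exact ⟨0, 0, le_rfl, hn, .inl ⟨fun _ _ => rfl, fun _ _ _ => by omega, fun _ _ => rfl⟩⟩
    · obtain ⟨p, hp, rfl⟩ := mem_image.mp hy
      simp only [leftWindows, mem_filter, mem_product, mem_range] at hp
      exact ⟨p.1, p.2, by omega, hp.1.2, .inl isShift_shiftL⟩
    · obtain ⟨p, hp, rfl⟩ := mem_image.mp hy
      simp only [rightWindows, mem_filter, mem_product, mem_range] at hp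
      exact ⟨p.1, p.2, by omega, hp.1.2, .inr (isShift_shiftR hp.1.2)⟩

def HasWindow (x y : Fin n → Fin 2) (i j : ℕ) : Prop :=
  (∀ t < i, seq y t = seq x t) ∧ seq y i ≠ seq x i ∧ seq y j ≠ seq x j ∧
    ∀ t, j < t → seq y t = seq x t

section Windows

variable {x y : Fin n → Fin 2} {i j i' j' : ℕ} {p : ℕ × ℕ}

lemma HasWindow.unique (h : HasWindow x y i j) (h' : HasWindow x y i' j') : i = i' ∧ j = j' := by
  obtain ⟨h₁, h₂, h₃, h₄⟩ := h
  obtain ⟨h₁', h₂', h₃', h₄'⟩ := h'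
  refine ⟨le_antisymm ?_ ?_, le_antisymm ?_ ?_⟩ <;> by_contra hc <;> rw [not_le] at hc
  exacts [h₂' (h₁ i' hc), h₂ (h₁' i hc), h₃ (h₄' j hc), h₃' (h₄ j' hc)]

lemma HasWindow.ne (h : HasWindow x y i j) : y ≠ x := fun e => h.2.1 (by rw [e])

lemma hasWindow_shiftL (hp : p ∈ leftWindows x) : HasWindow x (shiftL x p.1 p.2) p.1 p.2 := by
  simp only [leftWindows, mem_filter, mem_product, mem_range, mem_changes] at hp
  obtain ⟨⟨-, hj⟩, hp⟩ := hp
  refine ⟨isShift_shiftL.1, ?_, ?_, isShift_shiftL.2.2⟩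
  · rw [seq_shiftL (by omega), if_neg (by omega)]
    split_ifs with h
    exacts [fin_two_add_one_ne _, fun e => (hp.resolve_left h).2.2 e.symm]
  · rw [seq_shiftL hj, if_neg (by omega), if_pos rfl]
    exact fin_two_add_one_ne _

lemma hasWindow_shiftR (hp : p ∈ rightWindows x) : HasWindow x (shiftR x p.1 p.2) p.1 p.2 := by
  simp only [rightWindows, mem_filter, mem_product, mem_range, mem_changes] at hp
  obtain ⟨⟨-, hj⟩, hlt, -, hx⟩ := hp
  refine ⟨fun t ht => ((isShift_shiftR hj).1 t ht).symm, ?_, ?_,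
    fun t ht => ((isShift_shiftR hj).2.2 t ht).symm⟩
  · rw [seq_shiftR (by omega), if_neg (by omega), if_pos rfl]
    exact fin_two_add_one_ne _
  · rw [seq_shiftR hj, if_neg (by omega), if_neg (by omega)]
    rwa [Nat.sub_add_cancel (by omega)] at hx

lemma injOn_shiftL : Set.InjOn (fun p : ℕ × ℕ => shiftL x p.1 p.2) (leftWindows x) :=
  fun p hp q hq (h : shiftL x p.1 p.2 = shiftL x q.1 q.2) =>
    Prod.ext_iff.mpr ((hasWindow_shiftL hp).unique (h ▸ hasWindow_shiftL hq))

lemma injOn_shiftR : Set.InjOn (fun p : ℕ × ℕ => shiftR x p.1 p.2) (rightWindows x) :=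
  fun p hp q hq (h : shiftR x p.1 p.2 = shiftR x q.1 q.2) =>
    Prod.ext_iff.mpr ((hasWindow_shiftR hp).unique (h ▸ hasWindow_shiftR hq))

lemma notMem_leftShifts_union_rightShifts : x ∉ leftShifts x ∪ rightShifts x := by
  simp only [leftShifts, rightShifts, mem_union, mem_image, not_or, not_exists, not_and]
  exact ⟨fun p hp => (hasWindow_shiftL hp).ne, fun p hp => (hasWindow_shiftR hp).ne⟩

lemma shiftL_eq_shiftR_iff (hj : j < n) : shiftL x i j = shiftR x i j ↔ IsAltWindow x i j := by
  constructor
  · intro h t hit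
    have hL : ∀ s, i ≤ s → s < j → seq (shiftL x i j) s = seq x (s + 1) := fun s h₁ h₂ => by
      rw [seq_shiftL (by omega), if_neg (by omega), if_neg (by omega)]
    induction t, hit using Nat.le_induction with
    | base =>
      intro hij
      rw [← hL i le_rfl hij, h, seq_shiftR (by omega), if_neg (by omega), if_pos rfl]
      exact (fin_two_add_one_ne _).symm
    | succ t hit ih =>
      intro ht
      rw [← hL (t + 1) (by omega) ht, h, seq_shiftR (by omega), if_neg (by omega),
        if_neg (by omega), Nat.add_sub_cancel]
      exact (ih (by omega)).symm
  · intro h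
    refine eq_of_seq_eq fun t ht => ?_
    rw [seq_shiftL ht, seq_shiftR ht]
    split_ifs with h₁ h₂ h₃ h₃
    · rfl
    · rw [h₃]
    · have := h (t - 1) (by omega) (by omega)
      rw [Nat.sub_add_cancel (by omega)] at this
      exact (fin_two_eq_add_one_of_ne this).symm
    · subst h₃
      exact fin_two_eq_add_one_of_ne (h t (by omega) (by omega)).symm
    · have := h (t - 1) (by omega) (by omega)
      rw [Nat.sub_add_cancel (by omega)] at this
      exact (fin_two_eq_of_ne_of_ne this (h t (by omega) (by omega))).symm

noncomputable def altPairs (x : Fin n → Fin 2) : Finset (ℕ × ℕ) :=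
  {p ∈ range n ×ˢ range n | p.1 < p.2 ∧ IsAltWindow x p.1 p.2}

lemma altPairs_subset_leftWindows : altPairs x ⊆ leftWindows x := by
  intro p hp
  simp only [altPairs, leftWindows, mem_filter, mem_product, mem_range, mem_changes] at hp ⊢
  exact ⟨hp.1, .inr ⟨hp.2.1, by omega, hp.2.2 p.1 le_rfl hp.2.1⟩⟩

lemma leftShifts_inter_rightShifts :
    leftShifts x ∩ rightShifts x = (altPairs x).image fun p => shiftL x p.1 p.2 := by
  ext y
  simp only [leftShifts, rightShifts, mem_inter, mem_image]
  constructor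
  · rintro ⟨⟨p, hp, rfl⟩, q, hq, hqp⟩
    obtain rfl : q = p :=
      Prod.ext_iff.mpr ((hasWindow_shiftR hq).unique (hqp ▸ hasWindow_shiftL hp))
    refine ⟨q, ?_, rfl⟩
    simp only [rightWindows, altPairs, mem_filter, mem_product, mem_range] at hq ⊢
    exact ⟨hq.1, hq.2.1, (shiftL_eq_shiftR_iff hq.1.2).mp hqp.symm⟩
  · rintro ⟨p, hp, rfl⟩
    have hp' := hp
    simp only [altPairs, mem_filter, mem_product, mem_range] at hp'
    refine ⟨⟨p, altPairs_subset_leftWindows hp, rfl⟩, p, ?_,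
      ((shiftL_eq_shiftR_iff hp'.1.2).mpr hp'.2.2).symm⟩
    simp only [rightWindows, mem_filter, mem_product, mem_range, mem_changes]
    refine ⟨hp'.1, hp'.2.1, by omega, ?_⟩
    exact hp'.2.2 (p.2 - 1) (by omega) (by omega)

end Windows

lemma card_filter_fst_mem_add_card_filter_pred_snd_mem (S : Finset ℕ)
    (hS : ∀ d ∈ S, d + 1 < n) :
    #{p ∈ range n ×ˢ range n | p.1 < p.2 ∧ p.1 ∈ S} +
      #{p ∈ range n ×ˢ range n | p.1 < p.2 ∧ p.2 - 1 ∈ S} = n * #S := by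
  have h₁ : {p ∈ range n ×ˢ range n | p.1 < p.2 ∧ p.1 ∈ S} = {p ∈ S ×ˢ range n | p.1 < p.2} := by
    ext ⟨d, j⟩
    simp only [mem_filter, mem_product, mem_range]
    constructor
    · rintro ⟨⟨-, hj⟩, hdj, hd⟩
      exact ⟨⟨hd, hj⟩, hdj⟩
    · rintro ⟨⟨hd, hj⟩, hdj⟩
      exact ⟨⟨by omega, hj⟩, hdj, hd⟩
  have h₂ : {p ∈ range n ×ˢ range n | p.1 < p.2 ∧ p.2 - 1 ∈ S} =
      {p ∈ range n ×ˢ S | p.1 ≤ p.2}.image fun p => (p.1, p.2 + 1) := by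
    ext ⟨i, j⟩
    simp only [mem_filter, mem_product, mem_range, mem_image, Prod.mk.injEq]
    constructor
    · rintro ⟨⟨hi, -⟩, hij, hj⟩
      exact ⟨(i, j - 1), ⟨⟨hi, hj⟩, by omega⟩, rfl, by omega⟩
    · rintro ⟨⟨i, d⟩, ⟨⟨hi, hd⟩, hid⟩, rfl, rfl⟩
      have := hS d hd
      exact ⟨⟨hi, by omega⟩, by omega, by simpa using hd⟩
  have hinj : Function.Injective fun p : ℕ × ℕ => (p.1, p.2 + 1) := fun p q h => by
    simp only [Prod.mk.injEq] at h
    exact Prod.ext h.1 (by omega)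
  -- for each `d ∈ S`, the two families contribute `{j | d < j}` and `{i | i ≤ d}`,
  -- which partition `range n`
  rw [h₁, h₂, card_image_of_injective _ hinj, card_filter, card_filter, sum_product,
    sum_product_right, ← sum_add_distrib, card_eq_sum_ones S, mul_sum, mul_one]
  refine sum_congr rfl fun d _ => ?_
  have := card_filter_add_card_filter_not (s := range n) (d < ·)
  simp only [not_lt, card_range] at this
  rwa [← card_filter, ← card_filter]

lemma card_leftWindows_add_card_rightWindows (x : Fin n → Fin 2) :
    #(leftWindows x) + #(rightWindows x) = n * #(changes x) + n := by
  have hdiag : {p ∈ range n ×ˢ range n | p.1 = p.2} = (range n).diag := by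
    ext p
    simp only [mem_filter, mem_product, mem_diag]
    constructor
    · rintro ⟨⟨h, -⟩, e⟩; exact ⟨h, e⟩
    · rintro ⟨h, e⟩; exact ⟨⟨h, e ▸ h⟩, e⟩
  have hdisj : Disjoint {p ∈ range n ×ˢ range n | p.1 = p.2}
      {p ∈ range n ×ˢ range n | p.1 < p.2 ∧ p.1 ∈ changes x} :=
    disjoint_filter.mpr fun p _ h₁ h₂ => h₂.1.ne h₁
  have := card_filter_fst_mem_add_card_filter_pred_snd_mem (changes x)
    fun d hd => (mem_changes.mp hd).1
  rw [leftWindows, filter_or, card_union_of_disjoint hdisj, hdiag, diag_card, card_range,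
    rightWindows]
  omega

lemma card_leftShifts (x : Fin n → Fin 2) : #(leftShifts x) = #(leftWindows x) :=
  card_image_of_injOn injOn_shiftL

lemma card_rightShifts (x : Fin n → Fin 2) : #(rightShifts x) = #(rightWindows x) :=
  card_image_of_injOn injOn_shiftR

theorem card_fllBall_one_add_card_altPairs (hn : 1 ≤ n) (x : Fin n → Fin 2) :
    #(fllBall 2 n 1 x) + #(altPairs x) = n * #(changes x) + n + 1 := by
  have hunion := card_union_add_card_inter (leftShifts x) (rightShifts x)
  rw [leftShifts_inter_rightShifts, card_image_of_injOn (injOn_shiftL.mono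
      altPairs_subset_leftWindows), card_leftShifts, card_rightShifts,
    card_leftWindows_add_card_rightWindows] at hunion
  rw [fllBall_two_one_eq hn, card_insert_of_notMem notMem_leftShifts_union_rightShifts]
  omega

section Segments

variable {x : Fin n → Fin 2} {i j : ℕ}

lemma isAltList_blockSeg_iff (hij : i ≤ j) (hj : j < n) :
    IsAltList (blockSeg (List.ofFn x) i j) ↔ IsAltWindow x i j := by
  have hlen : (blockSeg (List.ofFn x) i j).length = j + 1 - i := by
    simp only [blockSeg, List.length_take, List.length_drop, List.length_ofFn]
    omega
  have get : ∀ u (hu : u < (blockSeg (List.ofFn x) i j).length),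
      (blockSeg (List.ofFn x) i j).get ⟨u, hu⟩ = seq x (i + u) := fun u hu => by
    simp only [blockSeg, List.get_eq_getElem, List.getElem_take, List.getElem_drop,
      getElem_ofFn_eq_seq]
  simp only [IsAltList, get, hlen]
  constructor
  · rintro ⟨h, -⟩ t h₁ h₂
    have := h (t - i) (by omega)
    rwa [← add_assoc, Nat.add_sub_cancel' h₁] at this
  · intro h
    refine ⟨fun u hu => ?_, fun u hu => ?_⟩
    · simpa [add_assoc] using h (i + u) (by omega) (by omega)
    · exact fin_two_eq_of_ne_of_ne (h (i + u) (by omega) (by omega))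
        (by simpa [add_assoc] using h (i + u + 1) (by omega) (by omega))

lemma isAltWindow_succ_right :
    IsAltWindow x i (j + 1) ↔ IsAltWindow x i j ∧ (i ≤ j → seq x j ≠ seq x (j + 1)) := by
  constructor
  · exact fun h => ⟨fun t h₁ h₂ => h t h₁ (by omega), fun hij => h j hij (by omega)⟩
  · rintro ⟨h, hj⟩ t h₁ h₂
    rcases (Nat.lt_succ_iff.mp h₂).lt_or_eq with h₂ | rfl
    exacts [h t h₁ h₂, hj h₁]

lemma isAltWindow_pred_left (hi : 0 < i) :
    IsAltWindow x (i - 1) j ↔ (i ≤ j → seq x (i - 1) ≠ seq x i) ∧ IsAltWindow x i j := by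
  constructor
  · refine fun h => ⟨fun hij => ?_, fun t h₁ h₂ => h t (by omega) h₂⟩
    simpa [Nat.sub_add_cancel hi] using h (i - 1) le_rfl (by omega)
  · rintro ⟨hi', h⟩ t h₁ h₂
    rcases (show i - 1 ≤ t from h₁).eq_or_lt with rfl | h₁
    · simpa [Nat.sub_add_cancel hi] using hi' (by omega)
    · exact h t (by omega) h₂

lemma mem_maxAltSegs_iff {p : ℕ × ℕ} :
    p ∈ maxAltSegs (List.ofFn x) ↔ p.1 ≤ p.2 ∧ p.2 < n ∧ IsAltWindow x p.1 p.2 ∧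
      (p.1 = 0 ∨ seq x (p.1 - 1) = seq x p.1) ∧ (p.2 + 1 = n ∨ seq x p.2 = seq x (p.2 + 1)) := by
  simp only [maxAltSegs, IsMaxAltSeg, mem_filter, mem_product, mem_range, List.length_ofFn]
  by_cases hp : p.1 ≤ p.2 ∧ p.2 < n ∧ IsAltWindow x p.1 p.2
  swap
  · refine ⟨fun ⟨_, hij, hj, halt, _⟩ => ?_, fun ⟨hij, hj, halt, _⟩ => ?_⟩ <;> refine absurd ?_ hp
    exacts [⟨hij, hj, (isAltList_blockSeg_iff hij hj).mp halt⟩, ⟨hij, hj, halt⟩]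
  obtain ⟨hij, hj, halt⟩ := hp
  have left : p.1 = 0 ∨ ¬IsAltList (blockSeg (List.ofFn x) (p.1 - 1) p.2) ↔
      p.1 = 0 ∨ seq x (p.1 - 1) = seq x p.1 := by
    rcases Nat.eq_zero_or_pos p.1 with h | h
    · simp [h]
    · simp [h.ne', isAltList_blockSeg_iff (by omega : p.1 - 1 ≤ p.2) hj,
        isAltWindow_pred_left h, hij, halt]
  have right : p.2 = n - 1 ∨ ¬IsAltList (blockSeg (List.ofFn x) p.1 (p.2 + 1)) ↔
      p.2 + 1 = n ∨ seq x p.2 = seq x (p.2 + 1) := by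
    rcases (Nat.succ_le_of_lt hj).eq_or_lt with h | h
    · simp [← h]
    · simp [show p.2 ≠ n - 1 by omega, show p.2 + 1 ≠ n by omega,
        isAltList_blockSeg_iff (by omega : p.1 ≤ p.2 + 1) h, isAltWindow_succ_right, hij, halt]
  rw [left, right, isAltList_blockSeg_iff hij hj]
  simp only [hij, hj, halt, true_and, and_true, and_iff_right_iff_imp]
  exact fun _ => by omega

lemma exists_mem_maxAltSegs (hij : i ≤ j) (hj : j < n) (h : IsAltWindow x i j) :
    ∃ p ∈ maxAltSegs (List.ofFn x), p.1 ≤ i ∧ j ≤ p.2 := by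
  let IsStart s := s = 0 ∨ seq x (s - 1) = seq x s
  let IsEnd e := j ≤ e ∧ (e + 1 = n ∨ seq x e = seq x (e + 1))
  have hend : ∃ e, IsEnd e := ⟨n - 1, by omega, .inl (by omega)⟩
  set s := Nat.findGreatest IsStart i
  set e := Nat.find hend
  have hs : IsStart s := Nat.findGreatest_spec (Nat.zero_le i) (.inl rfl)
  have he : IsEnd e := Nat.find_spec hend
  have hsi : s ≤ i := Nat.findGreatest_le i
  have hen : e < n := by have := Nat.find_min' hend (m := n - 1) ⟨by omega, .inl (by omega)⟩; omega
  refine ⟨(s, e), mem_maxAltSegs_iff.mpr ⟨by omega, hen, fun t h₁ h₂ => ?_, hs, he.2⟩,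
    hsi, he.1⟩
  by_cases hti : t < i
  · have := Nat.findGreatest_is_greatest (P := IsStart) (k := t + 1) (by omega) hti
    simpa [IsStart] using this
  by_cases htj : t < j
  · exact h t (by omega) htj
  · have := Nat.find_min hend h₂
    simp only [IsEnd, not_and, not_or] at this
    exact (this (by omega)).2

lemma eq_of_mem_maxAltSegs {p q : ℕ × ℕ} {t : ℕ} (hp : p ∈ maxAltSegs (List.ofFn x))
    (hq : q ∈ maxAltSegs (List.ofFn x)) (htp : t ∈ Icc p.1 p.2) (htq : t ∈ Icc q.1 q.2) :
    p = q := by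
  have key : ∀ p q : ℕ × ℕ, p ∈ maxAltSegs (List.ofFn x) → q ∈ maxAltSegs (List.ofFn x) →
      t ∈ Icc p.1 p.2 → t ∈ Icc q.1 q.2 → p.1 ≤ q.1 ∧ q.2 ≤ p.2 := by
    intro p q hp hq htp htq
    rw [mem_Icc] at htp htq
    obtain ⟨-, hpn, -, hp₁, hp₂⟩ := mem_maxAltSegs_iff.mp hp
    obtain ⟨-, hqn, hq, -⟩ := mem_maxAltSegs_iff.mp hq
    constructor <;> by_contra hc <;> rw [not_le] at hc
    · refine hq (p.1 - 1) (by omega) (by omega) ?_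
      rw [Nat.sub_add_cancel (by omega)]
      exact hp₁.resolve_left (by omega)
    · exact hq p.2 (by omega) hc (hp₂.resolve_left (by omega))
  have h₁ := key p q hp hq htp htq
  have h₂ := key q p hq hp htq htp
  exact Prod.ext (by omega) (by omega)

lemma pairwiseDisjoint_maxAltSegs :
    (maxAltSegs (List.ofFn x) : Set (ℕ × ℕ)).PairwiseDisjoint fun p => Icc p.1 p.2 :=
  fun _ hp _ hq hpq =>
    disjoint_left.mpr fun _ htp htq => hpq (eq_of_mem_maxAltSegs hp hq htp htq)

lemma isAltWindow_iff_exists_mem_maxAltSegs (hij : i ≤ j) (hj : j < n) :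
    IsAltWindow x i j ↔ ∃ p ∈ maxAltSegs (List.ofFn x), p.1 ≤ i ∧ j ≤ p.2 := by
  refine ⟨exists_mem_maxAltSegs hij hj, fun ⟨p, hp, hi, hj⟩ t h₁ h₂ => ?_⟩
  exact (mem_maxAltSegs_iff.mp hp).2.2.1 t (by omega) (by omega)

lemma range_eq_biUnion_maxAltSegs :
    range n = (maxAltSegs (List.ofFn x)).biUnion fun p => Icc p.1 p.2 := by
  ext t
  simp only [mem_range, mem_biUnion, mem_Icc]
  constructor
  · intro ht
    obtain ⟨p, hp, h⟩ := exists_mem_maxAltSegs le_rfl ht fun _ h₁ h₂ => absurd h₂ (by omega)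
    exact ⟨p, hp, h⟩
  · rintro ⟨p, hp, -, h⟩
    exact h.trans_lt (mem_maxAltSegs_iff.mp hp).2.1

lemma changes_eq_biUnion_maxAltSegs :
    changes x = (maxAltSegs (List.ofFn x)).biUnion fun p => Ico p.1 p.2 := by
  ext t
  simp only [mem_changes, mem_biUnion, mem_Ico]
  constructor
  · rintro ⟨ht, hx⟩
    obtain ⟨p, hp, h₁, h₂⟩ := exists_mem_maxAltSegs (Nat.le_succ t) ht fun s h₁ h₂ => by
      rwa [show s = t by omega]
    exact ⟨p, hp, h₁, h₂⟩
  · rintro ⟨p, hp, h₁, h₂⟩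
    obtain ⟨-, hpn, halt, -⟩ := mem_maxAltSegs_iff.mp hp
    exact ⟨by omega, halt t h₁ h₂⟩

lemma altPairs_eq_biUnion_maxAltSegs : altPairs x =
    (maxAltSegs (List.ofFn x)).biUnion fun p => {q ∈ Icc p.1 p.2 ×ˢ Icc p.1 p.2 | q.1 < q.2} := by
  ext ⟨i, j⟩
  simp only [altPairs, mem_filter, mem_product, mem_range, mem_biUnion, mem_Icc]
  constructor
  · rintro ⟨⟨-, hj⟩, hij, halt⟩
    obtain ⟨p, hp, h₁, h₂⟩ := exists_mem_maxAltSegs hij.le hj halt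
    exact ⟨p, hp, ⟨⟨h₁, by omega⟩, by omega, h₂⟩, hij⟩
  · rintro ⟨p, hp, ⟨⟨h₁, -⟩, -, h₂⟩, hij⟩
    have hpn := (mem_maxAltSegs_iff.mp hp).2.1
    exact ⟨⟨by omega, by omega⟩, hij,
      (isAltWindow_iff_exists_mem_maxAltSegs hij.le (by omega)).mpr ⟨p, hp, h₁, h₂⟩⟩

lemma segLenSum_ofFn (x : Fin n → Fin 2) : segLenSum (List.ofFn x) = n := by
  have := card_biUnion (pairwiseDisjoint_maxAltSegs (x := x))
  rw [← range_eq_biUnion_maxAltSegs, card_range] at this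
  simpa only [segLenSum, Nat.card_Icc] using this.symm

lemma card_changes_add_numAltSegs (x : Fin n → Fin 2) :
    #(changes x) + numAltSegs (List.ofFn x) = n := by
  rw [changes_eq_biUnion_maxAltSegs,
    card_biUnion (pairwiseDisjoint_maxAltSegs.mono fun _ => Ico_subset_Icc_self), numAltSegs,
    card_eq_sum_ones, ← sum_add_distrib]
  conv_rhs => rw [← segLenSum_ofFn x, segLenSum]
  refine sum_congr rfl fun p hp => ?_
  have := (mem_maxAltSegs_iff.mp hp).1
  rw [Nat.card_Ico]
  omega

lemma card_altPairs (x : Fin n → Fin 2) :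
    #(altPairs x) = ∑ p ∈ maxAltSegs (List.ofFn x), (p.2 + 1 - p.1).choose 2 := by
  rw [altPairs_eq_biUnion_maxAltSegs, card_biUnion fun p hp q hq hpq => ?_]
  · simp only [card_product_filter_lt, Nat.card_Icc]
  refine disjoint_left.mpr fun r hrp hrq => hpq ?_
  simp only [mem_filter, mem_product] at hrp hrq
  exact eq_of_mem_maxAltSegs hp hq hrp.1.1 hrq.1.1

end Segments

theorem card_fllBall_one_add_sum_choose (hn : 1 ≤ n) (x : Fin n → Fin 2) :
    #(fllBall 2 n 1 x) + ∑ p ∈ maxAltSegs (List.ofFn x), (p.2 + 1 - p.1).choose 2 +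
      n * numAltSegs (List.ofFn x) = n * n + n + 1 := by
  have hball := card_fllBall_one_add_card_altPairs hn x
  have hn' : n * #(changes x) + n * numAltSegs (List.ofFn x) = n * n := by
    rw [← mul_add, card_changes_add_numAltSegs]
  rw [← card_altPairs]
  omega

lemma sum_comp_eq_of_forall_eq_or_eq {ι M : Type*} [AddCommMonoid M] {s : Finset ι} {f : ι → ℕ}
    {u v : ℕ} (h : ∀ i ∈ s, f i = u ∨ f i = v) (g : ℕ → M) :
    ∑ i ∈ s, g (f i) = #{i ∈ s | f i = u} • g u + #{i ∈ s | f i ≠ u} • g v := by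
  rw [← sum_filter_add_sum_filter_not s (f · = u)]
  congr 1 <;> rw [← sum_const] <;> refine sum_congr rfl fun i hi => ?_ <;>
    obtain ⟨hi, hu⟩ := mem_filter.mp hi
  · rw [hu]
  · rw [(h i hi).resolve_left hu]

lemma eq_of_modEq_of_mem_Icc {a k m : ℕ} (hk : k ∈ Icc 1 a) (hm : m ∈ Icc 1 a)
    (h : k ≡ m [MOD a]) : k = m := by
  rw [mem_Icc] at hk hm
  have : k - 1 ≡ m - 1 [MOD a] :=
    Nat.ModEq.add_right_cancel' 1 (by rwa [Nat.sub_add_cancel hk.1, Nat.sub_add_cancel hm.1])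
  have := this.eq_of_lt_of_lt (by omega) (by omega)
  omega

lemma eq_of_eq_mul_ceilDiv_add {n a k m m' : ℕ} (hn : 1 ≤ n) (hk1 : 1 ≤ k) (hk2 : k ≤ a)
    (hk3 : k % a = n % a) (ha : m + m' = a)
    (hsum : n = m * ((n + a - 1) / a) + m' * ((n + a - 1) / a - 1)) : m = k := by
  set c := (n + a - 1) / a
  have hc : 1 ≤ c := Nat.pos_of_ne_zero fun h => by simp [h] at hsum; omega
  have hn' : n = m + a * (c - 1) := by
    obtain ⟨d, hd⟩ : ∃ d, c = d + 1 := ⟨c - 1, by omega⟩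
    rw [hsum, ← ha, hd, Nat.add_sub_cancel]
    ring
  have hm : 1 ≤ m := by
    by_contra h0
    have : n ⌈/⌉ a ≤ c - 1 := (ceilDiv_le_iff_le_mul (by omega)).mpr (by omega)
    rw [Nat.ceilDiv_eq_add_pred_div] at this
    omega
  refine eq_of_modEq_of_mem_Icc (mem_Icc.mpr ⟨hm, by omega⟩) (mem_Icc.mpr ⟨hk1, hk2⟩) ?_
  rw [Nat.ModEq, hk3, hn', Nat.add_mul_mod_self_left]

end FLLBall

theorem fll_ball_card_balanced_general (n a k : ℕ) (hn : 1 ≤ n)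
    (hk1 : 1 ≤ k) (hk2 : k ≤ a) (hk3 : k % a = n % a)
    (x : Fin n → Fin 2) (hx : IsBalanced n a x) :
    ((fllBall 2 n 1 x).card : ℚ) =
      ((n : ℚ) + 1 - a) * ((n : ℚ) - 1) + 2
        - ((k : ℚ) / 2) * ((((n + a - 1) / a : ℕ) : ℚ) - 1) * ((((n + a - 1) / a : ℕ) : ℚ) - 2)
        - (((a : ℚ) - k) / 2) * ((((n + a - 1) / a : ℕ) : ℚ) - 2)
            * ((((n + a - 1) / a : ℕ) : ℚ) - 3) := by
  obtain ⟨hA, hlen⟩ := hx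
  set c := (n + a - 1) / a
  obtain ⟨m, hm⟩ : ∃ m, #{p ∈ maxAltSegs (List.ofFn x) | p.2 + 1 - p.1 = c} = m := ⟨_, rfl⟩
  obtain ⟨m', hm'⟩ : ∃ m', #{p ∈ maxAltSegs (List.ofFn x) | p.2 + 1 - p.1 ≠ c} = m' := ⟨_, rfl⟩
  have ha : m + m' = a := by rw [← hA, ← hm, ← hm']; exact card_filter_add_card_filter_not _
  have hsum : n = m * c + m' * (c - 1) := by
    simpa [hm, hm'] using
      (FLLBall.segLenSum_ofFn x).symm.trans (FLLBall.sum_comp_eq_of_forall_eq_or_eq hlen id)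
  have hc : 1 ≤ c := Nat.pos_of_ne_zero fun h => by simp [h] at hsum; omega
  obtain rfl : m = k := FLLBall.eq_of_eq_mul_ceilDiv_add hn hk1 hk2 hk3 ha hsum
  have hball := FLLBall.card_fllBall_one_add_sum_choose hn x
  rw [FLLBall.sum_comp_eq_of_forall_eq_or_eq hlen (·.choose 2), hA, hm, hm', smul_eq_mul,
    smul_eq_mul] at hball
  have hballQ := congrArg (Nat.cast : ℕ → ℚ) hball
  have hsumQ := congrArg (Nat.cast : ℕ → ℚ) hsum
  have haQ := congrArg (Nat.cast : ℕ → ℚ) ha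
  push_cast [Nat.cast_choose_two, Nat.cast_sub hc] at hballQ hsumQ haQ
  rw [← haQ]
  linear_combination hballQ + n * haQ + hsumQ

/-- Size of the FLL `1`-ball centered at an `a`-balanced binary
sequence, where `k` is the unique integer with `1 ≤ k ≤ a` and `k ≡ n (mod a)`. -/
theorem fll_ball_card_balanced (n a k : ℕ) (hn : 1 ≤ n) (ha1 : 1 ≤ a) (han : a ≤ n)
    (hk1 : 1 ≤ k) (hk2 : k ≤ a) (hk3 : k % a = n % a)
    (x : Fin n → Fin 2) (hx : IsBalanced n a x) :
    ((fllBall 2 n 1 x).card : ℚ) =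
      ((n : ℚ) + 1 - a) * ((n : ℚ) - 1) + 2
        - ((k : ℚ) / 2) * ((((n + a - 1) / a : ℕ) : ℚ) - 1) * ((((n + a - 1) / a : ℕ) : ℚ) - 2)
        - (((a : ℚ) - k) / 2) * ((((n + a - 1) / a : ℕ) : ℚ) - 2)
            * ((((n + a - 1) / a : ℕ) : ℚ) - 3) :=
  fll_ball_card_balanced_general n a k hn hk1 hk2 hk3 x hx
end
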